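/- arXiv:2101.05562 — 8 statements merged into one kernel-verified Lean document; each statement's English description precedes it below -/
import Mathlib

section
/- Let a, b, c : ℕ → ℂ (indexed from 1) satisfy a_j c_j ≠ 0 for all j and ∑_{n≥1}(|1 − a_n| + |b_n| + |1 − c_n|) < ∞, and set Δ := ∑_{n≥1}(|b_n| + |1 − a_n c_n|). Then every eigenvalue λ of the Jacobi matrix J = J({a_j},{b_j},{c_j}) with λ ∉ [−2,2] satisfies |λ² − 4| ≤ (2Δ / log 2)². -/
noncomputable section

/-- The segment `[-2,2]` regarded as a subset of `ℂ`. -/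
def segC : Set ℂ := (fun x : ℝ => (x : ℂ)) '' Set.Icc (-2) 2

/-- `l` is an eigenvalue of the semi-infinite Jacobi matrix `J({a_j},{b_j},{c_j})`
(entries indexed from 1): there is a nonzero square-summable sequence `g = (g_k)_{k ≥ 1}`,
extended by `g 0 = 0`, satisfying the recurrence
`a_{k-1} g_{k-1} + b_k g_k + c_k g_{k+1} = l g_k` for all `k ≥ 1`. -/
def IsJacobiEigenvalue (a b c : ℕ → ℂ) (l : ℂ) : Prop :=
  ∃ g : ℕ → ℂ, g 0 = 0 ∧ g ≠ 0 ∧ Summable (fun k : ℕ => ‖g k‖ ^ 2) ∧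
    ∀ k : ℕ, 1 ≤ k → a (k - 1) * g (k - 1) + b k * g k + c k * g (k + 1) = l * g k

/-!
Write `l = z + z⁻¹` with `0 < ‖z‖ < 1`, so that `l² - 4 = (z - z⁻¹)²`. Rescaling an eigenvector
to `f n = g n * c₁ ⋯ c_{n-1}` turns the eigenvalue equation into the free recurrence
`f k + f (k + 2) - l f (k + 1) = ρ k` with `ρ k = (1 - a k c k) f k - b (k + 1) f (k + 1)`;
here `f` is bounded and `∑ ‖ρ k‖ ≤ Δ · sup ‖f‖`. A bounded solution of the free recurrence
vanishing at `0` is zero (its Casoratian with the decaying solution `zᵏ` is constant and tends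
to `0`), so `f` is the Dirichlet Green function `(z^|k-m| - z^(k+m)) / (z - z⁻¹)` applied to `ρ`.
The Green function is bounded by `2 / ‖z - z⁻¹‖`, whence `sup ‖f‖ ≤ 2Δ sup ‖f‖ / ‖z - z⁻¹‖`,
i.e. `‖l² - 4‖ ≤ (2Δ)²`, which is stronger than the claim since `log 2 < 1`.
-/

open Filter Topology

section Joukowski

lemma add_inv_mem_segC_of_norm_eq_one {z : ℂ} (hz : ‖z‖ = 1) : z + z⁻¹ ∈ segC := by
  have hre := abs_le.mp (hz ▸ Complex.abs_re_le_norm z)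
  refine ⟨2 * z.re, ⟨by linarith, by linarith⟩, ?_⟩
  rw [Complex.inv_eq_conj hz, Complex.add_conj]

lemma exists_norm_lt_one_add_inv_eq {l : ℂ} (hl : l ∉ segC) :
    ∃ z : ℂ, z ≠ 0 ∧ ‖z‖ < 1 ∧ z + z⁻¹ = l := by
  obtain ⟨w, hw⟩ := exists_quadratic_eq_zero one_ne_zero
    (IsAlgClosed.exists_eq_mul_self (discrim 1 (-l) 1))
  have hw0 : w ≠ 0 := by rintro rfl; simp at hw
  have hwl : w + w⁻¹ = l := by field_simp; linear_combination hw
  have hw1 : ‖w‖ ≠ 1 := fun h => hl (hwl ▸ add_inv_mem_segC_of_norm_eq_one h)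
  rcases hw1.lt_or_gt with h | h
  · exact ⟨w, hw0, h, hwl⟩
  · refine ⟨w⁻¹, inv_ne_zero hw0, ?_, by rw [inv_inv, add_comm, hwl]⟩
    rw [norm_inv]
    exact inv_lt_one_of_one_lt₀ h

lemma sub_inv_ne_zero_of_norm_lt_one {z : ℂ} (hz0 : z ≠ 0) (hz1 : ‖z‖ < 1) : z - z⁻¹ ≠ 0 := by
  intro h
  have h' := congrArg norm (sub_eq_zero.mp h)
  rw [norm_inv] at h'
  linarith [(one_lt_inv₀ (norm_pos_iff.mpr hz0)).mpr hz1]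

end Joukowski

def freeGreen (z : ℂ) (k m : ℕ) : ℂ := (z ^ ((k : ℤ) - m).natAbs - z ^ (k + m)) / (z - z⁻¹)

def freeResolvent (z : ℂ) (ρ : ℕ → ℂ) (k : ℕ) : ℂ := ∑' m, freeGreen z k (m + 1) * ρ m

section FreeRecurrence

variable {z : ℂ} {ρ : ℕ → ℂ}

lemma pow_add_pow_add_two (hz : z ≠ 0) (j : ℕ) :
    z ^ j + z ^ (j + 2) = (z + z⁻¹) * z ^ (j + 1) := by
  field_simp
  ring

lemma pow_natAbs_sub_one_add_pow_natAbs_add_one (hz : z ≠ 0) (n : ℤ) :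
    z ^ (n - 1).natAbs + z ^ (n + 1).natAbs - (z + z⁻¹) * z ^ n.natAbs =
      if n = 0 then z - z⁻¹ else 0 := by
  wlog hn : 0 ≤ n
  · have h := this hz (-n) (by omega)
    rw [show -n - 1 = -(n + 1) by ring, show -n + 1 = -(n - 1) by ring, Int.natAbs_neg,
      Int.natAbs_neg, Int.natAbs_neg, add_comm (z ^ _)] at h
    simpa only [neg_eq_zero] using h
  lift n to ℕ using hn
  rcases n with _ | j
  · simp
  · rw [if_neg (by omega), show ((j + 1 : ℕ) : ℤ) - 1 = j by push_cast; ring,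
      show ((j + 1 : ℕ) : ℤ) + 1 = ((j + 2 : ℕ) : ℤ) by push_cast; ring]
    simp only [Int.natAbs_natCast]
    rw [pow_add_pow_add_two hz j, sub_self]

@[simp]
lemma freeGreen_zero_left (m : ℕ) : freeGreen z 0 m = 0 := by
  simp [freeGreen]

lemma norm_freeGreen_le (hz : ‖z‖ < 1) (k m : ℕ) : ‖freeGreen z k m‖ ≤ 2 / ‖z - z⁻¹‖ := by
  rw [freeGreen, norm_div]
  gcongr
  calc ‖z ^ ((k : ℤ) - m).natAbs - z ^ (k + m)‖
      ≤ ‖z‖ ^ ((k : ℤ) - m).natAbs + ‖z‖ ^ (k + m) := by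
        rw [← norm_pow, ← norm_pow]; exact norm_sub_le _ _
    _ ≤ 1 + 1 := by gcongr <;> exact pow_le_one₀ (norm_nonneg z) hz.le
    _ = 2 := one_add_one_eq_two

lemma freeGreen_recurrence (hq : z - z⁻¹ ≠ 0) (k m : ℕ) :
    freeGreen z k m + freeGreen z (k + 2) m - (z + z⁻¹) * freeGreen z (k + 1) m =
      if k + 1 = m then 1 else 0 := by
  have hz : z ≠ 0 := by rintro rfl; simp at hq
  have hdiag := pow_natAbs_sub_one_add_pow_natAbs_add_one hz ((k : ℤ) + 1 - m)
  have hfree := pow_add_pow_add_two hz (k + m)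
  simp only [show (k : ℤ) + 1 - m = 0 ↔ k + 1 = m by omega] at hdiag
  simp only [freeGreen, ← add_div, mul_div_assoc', ← sub_div, div_eq_iff hq]
  push_cast
  rw [show (k : ℤ) - m = (k : ℤ) + 1 - m - 1 by ring,
    show (k : ℤ) + 2 - m = (k : ℤ) + 1 - m + 1 by ring,
    show k + 2 + m = k + m + 2 by ring, show k + 1 + m = k + m + 1 by ring]
  split_ifs at hdiag ⊢ <;> linear_combination hdiag - hfree

lemma norm_freeGreen_mul_le (hz : ‖z‖ < 1) (k m : ℕ) (x : ℂ) :
    ‖freeGreen z k m * x‖ ≤ 2 / ‖z - z⁻¹‖ * ‖x‖ := by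
  rw [norm_mul]
  gcongr
  exact norm_freeGreen_le hz k m

lemma summable_freeGreen_mul (hz : ‖z‖ < 1) (hρ : Summable fun m => ‖ρ m‖) (k : ℕ) :
    Summable fun m => freeGreen z k (m + 1) * ρ m :=
  .of_norm_bounded (hρ.mul_left _) fun m => norm_freeGreen_mul_le hz k (m + 1) (ρ m)

lemma norm_freeResolvent_le (hz : ‖z‖ < 1) (hρ : Summable fun m => ‖ρ m‖) (k : ℕ) :
    ‖freeResolvent z ρ k‖ ≤ 2 / ‖z - z⁻¹‖ * ∑' m, ‖ρ m‖ :=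
  tsum_of_norm_bounded (hρ.hasSum.mul_left _) fun m => norm_freeGreen_mul_le hz k (m + 1) (ρ m)

@[simp]
lemma freeResolvent_zero_left : freeResolvent z ρ 0 = 0 := by
  simp [freeResolvent]

lemma freeResolvent_recurrence (hz : ‖z‖ < 1) (hq : z - z⁻¹ ≠ 0)
    (hρ : Summable fun m => ‖ρ m‖) (k : ℕ) :
    freeResolvent z ρ k + freeResolvent z ρ (k + 2) - (z + z⁻¹) * freeResolvent z ρ (k + 1) =
      ρ k := by
  have hs := summable_freeGreen_mul hz hρ
  have hsum := ((hs k).hasSum.add (hs (k + 2)).hasSum).sub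
    ((hs (k + 1)).hasSum.mul_left (z + z⁻¹))
  have hδ : (fun m => freeGreen z k (m + 1) * ρ m + freeGreen z (k + 2) (m + 1) * ρ m -
      (z + z⁻¹) * (freeGreen z (k + 1) (m + 1) * ρ m)) = fun m => if m = k then ρ k else 0 := by
    funext m
    rw [show freeGreen z k (m + 1) * ρ m + freeGreen z (k + 2) (m + 1) * ρ m -
      (z + z⁻¹) * (freeGreen z (k + 1) (m + 1) * ρ m) =
        (freeGreen z k (m + 1) + freeGreen z (k + 2) (m + 1) -
          (z + z⁻¹) * freeGreen z (k + 1) (m + 1)) * ρ m by ring, freeGreen_recurrence hq]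
    by_cases h : m = k
    · simp [h]
    · simp [h, Ne.symm h]
  exact (hδ ▸ hsum).unique (hasSum_ite_eq k (ρ k))

lemma eq_zero_of_free_recurrence (hz0 : z ≠ 0) (hz1 : ‖z‖ < 1) {w : ℕ → ℂ} {B : ℝ}
    (hB : ∀ k, ‖w k‖ ≤ B) (h0 : w 0 = 0)
    (hrec : ∀ k, w k + w (k + 2) - (z + z⁻¹) * w (k + 1) = 0) : w = 0 := by
  -- the Casoratian of `w` with the decaying solution `zᵏ`
  have hcas : ∀ k, z ^ k * (w (k + 1) - z * w k) = w 1 := by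
    intro k
    induction k with
    | zero => simp [h0]
    | succ k ih =>
      rw [← ih]
      linear_combination z ^ (k + 1) * hrec k + z ^ k * w (k + 1) * mul_inv_cancel₀ hz0
  have hw1 : w 1 = 0 := by
    have hlim : Tendsto (fun k => ‖z‖ ^ k * (2 * B)) atTop (𝓝 0) := by
      simpa using (tendsto_pow_atTop_nhds_zero_of_lt_one (norm_nonneg z) hz1).mul_const (2 * B)
    refine norm_le_zero_iff.mp (ge_of_tendsto' hlim fun k => ?_)
    rw [← hcas k, norm_mul, norm_pow]
    gcongr
    calc ‖w (k + 1) - z * w k‖ ≤ ‖w (k + 1)‖ + ‖z‖ * ‖w k‖ := by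
          rw [← norm_mul]; exact norm_sub_le _ _
      _ ≤ B + 1 * B := by gcongr <;> exact hB _
      _ = 2 * B := by ring
  suffices ∀ k, w k = 0 from funext this
  intro k
  induction k using Nat.twoStepInduction with
  | zero => exact h0
  | one => exact hw1
  | more k ih0 ih1 => linear_combination hrec k - ih0 + (z + z⁻¹) * ih1

theorem norm_le_of_perturbed_free_recurrence (hz0 : z ≠ 0) (hz1 : ‖z‖ < 1) {f : ℕ → ℂ} {B : ℝ}
    (hB : ∀ k, ‖f k‖ ≤ B) (h0 : f 0 = 0) (hρ : Summable fun m => ‖ρ m‖)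
    (hrec : ∀ k, f k + f (k + 2) - (z + z⁻¹) * f (k + 1) = ρ k) (k : ℕ) :
    ‖f k‖ ≤ 2 / ‖z - z⁻¹‖ * ∑' m, ‖ρ m‖ := by
  have hq := sub_inv_ne_zero_of_norm_lt_one hz0 hz1
  have hf : f - freeResolvent z ρ = 0 :=
    eq_zero_of_free_recurrence hz0 hz1
      (fun k => (norm_sub_le _ _).trans (add_le_add (hB k) (norm_freeResolvent_le hz1 hρ k)))
      (by simp [h0])
      (fun k => by
        simp only [Pi.sub_apply]
        linear_combination hrec k - freeResolvent_recurrence hz1 hq hρ k)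
  rw [sub_eq_zero.mp hf]
  exact norm_freeResolvent_le hz1 hρ k

end FreeRecurrence

section Summability

lemma summable_norm_of_summable_norm_add_add {x y w : ℕ → ℂ}
    (h : Summable fun n => ‖x n‖ + ‖y n‖ + ‖w n‖) :
    Summable (fun n => ‖x n‖) ∧ Summable (fun n => ‖y n‖) ∧ Summable (fun n => ‖w n‖) :=
  ⟨h.of_nonneg_of_le (fun _ => norm_nonneg _)
      fun n => by linarith [norm_nonneg (y n), norm_nonneg (w n)],
    h.of_nonneg_of_le (fun _ => norm_nonneg _)
      fun n => by linarith [norm_nonneg (x n), norm_nonneg (w n)],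
    h.of_nonneg_of_le (fun _ => norm_nonneg _)
      fun n => by linarith [norm_nonneg (x n), norm_nonneg (y n)]⟩

lemma norm_le_one_add_norm_one_sub {R : Type*} [SeminormedRing R] [NormOneClass R] (x : R) :
    ‖x‖ ≤ 1 + ‖1 - x‖ := by
  simpa [norm_sub_rev x] using norm_le_norm_add_norm_sub' x 1

lemma summable_norm_one_sub_mul {u v : ℕ → ℂ} (hu : Summable fun n => ‖1 - u n‖)
    (hv : Summable fun n => ‖1 - v n‖) : Summable fun n => ‖1 - u n * v n‖ := by
  refine .of_nonneg_of_le (fun _ => norm_nonneg _) (fun n => ?_)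
    (hu.add (hv.mul_left (1 + ∑' n, ‖1 - u n‖)))
  have hun : ‖u n‖ ≤ 1 + ∑' n, ‖1 - u n‖ := (norm_le_one_add_norm_one_sub (u n)).trans
    (by gcongr; exact hu.le_tsum n fun _ _ => norm_nonneg _)
  calc ‖1 - u n * v n‖ = ‖(1 - u n) + u n * (1 - v n)‖ := by ring_nf
    _ ≤ ‖1 - u n‖ + ‖u n‖ * ‖1 - v n‖ := (norm_add_le _ _).trans_eq (by rw [norm_mul])
    _ ≤ _ := by gcongr

lemma norm_prod_Ico_le_exp_tsum {c : ℕ → ℂ} (hc : Summable fun n => ‖1 - c (n + 1)‖) (n : ℕ) :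
    ‖∏ j ∈ Finset.Ico 1 n, c j‖ ≤ Real.exp (∑' n, ‖1 - c (n + 1)‖) :=
  calc ‖∏ j ∈ Finset.Ico 1 n, c j‖ ≤ ∏ j ∈ Finset.Ico 1 n, (1 + ‖1 - c j‖) := by
        rw [norm_prod]
        exact Finset.prod_le_prod (fun _ _ => norm_nonneg _)
          fun j _ => norm_le_one_add_norm_one_sub (c j)
    _ ≤ Real.exp (∑ j ∈ Finset.Ico 1 n, ‖1 - c j‖) :=
        Real.prod_one_add_le_exp_sum _ fun _ => norm_nonneg _
    _ ≤ Real.exp (∑' n, ‖1 - c (n + 1)‖) := by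
        rw [Finset.sum_Ico_eq_sum_range]
        simp_rw [add_comm 1]
        gcongr
        exact hc.sum_le_tsum _ fun _ _ => norm_nonneg _

lemma summable_norm_mul_sub_mul_succ_and_tsum_le {p q f : ℕ → ℂ} {M : ℝ}
    (hM : ∀ k, ‖f k‖ ≤ M) (h0 : f 0 = 0) (hp : Summable fun n => ‖p (n + 1)‖)
    (hq : Summable fun n => ‖q (n + 1)‖) :
    Summable (fun k => ‖p k * f k - q (k + 1) * f (k + 1)‖) ∧
      ∑' k, ‖p k * f k - q (k + 1) * f (k + 1)‖ ≤ M * ∑' n, (‖q (n + 1)‖ + ‖p (n + 1)‖) := by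
  have hbound (r : ℕ → ℂ) (k : ℕ) : ‖r k * f k‖ ≤ M * ‖r k‖ := by
    rw [norm_mul, mul_comm M]
    exact mul_le_mul_of_nonneg_left (hM k) (norm_nonneg _)
  have hpf : Summable fun k => ‖p (k + 1) * f (k + 1)‖ :=
    .of_nonneg_of_le (fun _ => norm_nonneg _) (fun k => hbound p (k + 1)) (hp.mul_left M)
  have hqf : Summable fun k => ‖q (k + 1) * f (k + 1)‖ :=
    .of_nonneg_of_le (fun _ => norm_nonneg _) (fun k => hbound q (k + 1)) (hq.mul_left M)
  have hpf' : Summable fun k => ‖p k * f k‖ := (summable_nat_add_iff 1).mp hpf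
  have hshift : ∑' k, ‖p k * f k‖ = ∑' k, ‖p (k + 1) * f (k + 1)‖ := by
    rw [hpf'.tsum_eq_zero_add, h0, mul_zero, norm_zero, zero_add]
  have hsum : Summable fun k => ‖p k * f k - q (k + 1) * f (k + 1)‖ :=
    .of_nonneg_of_le (fun _ => norm_nonneg _) (fun _ => norm_sub_le _ _) (hpf'.add hqf)
  refine ⟨hsum, ?_⟩
  calc ∑' k, ‖p k * f k - q (k + 1) * f (k + 1)‖
      ≤ ∑' k, (‖p k * f k‖ + ‖q (k + 1) * f (k + 1)‖) :=
        hsum.tsum_le_tsum (fun _ => norm_sub_le _ _) (hpf'.add hqf)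
    _ = ∑' k, (‖q (k + 1) * f (k + 1)‖ + ‖p (k + 1) * f (k + 1)‖) := by
        rw [hpf'.tsum_add hqf, hshift, add_comm, hqf.tsum_add hpf]
    _ ≤ ∑' n, M * (‖q (n + 1)‖ + ‖p (n + 1)‖) :=
        (hqf.add hpf).tsum_le_tsum
          (fun k => by rw [mul_add]; exact add_le_add (hbound q _) (hbound p _))
          ((hq.add hp).mul_left M)
    _ = M * ∑' n, (‖q (n + 1)‖ + ‖p (n + 1)‖) := tsum_mul_left

end Summability

def gaugeTransform (c g : ℕ → ℂ) (n : ℕ) : ℂ := g n * ∏ j ∈ Finset.Ico 1 n, c j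

section Gauge

variable {a b c g : ℕ → ℂ}

lemma gaugeTransform_zero (hg0 : g 0 = 0) : gaugeTransform c g 0 = 0 := by
  simp [gaugeTransform, hg0]

lemma gaugeTransform_ne_zero (hc : ∀ j, 1 ≤ j → c j ≠ 0) (hg : g ≠ 0) :
    gaugeTransform c g ≠ 0 := by
  obtain ⟨k, hk⟩ := Function.ne_iff.mp hg
  refine Function.ne_iff.mpr ⟨k, mul_ne_zero hk (Finset.prod_ne_zero_iff.mpr fun j hj => ?_)⟩
  exact hc j (Finset.mem_Ico.mp hj).1

lemma bddAbove_norm_gaugeTransform (hg : Summable fun k => ‖g k‖ ^ 2)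
    (hc : Summable fun n => ‖1 - c (n + 1)‖) :
    BddAbove (Set.range fun k => ‖gaugeTransform c g k‖) := by
  refine ⟨√(∑' k, ‖g k‖ ^ 2) * Real.exp (∑' n, ‖1 - c (n + 1)‖), ?_⟩
  rintro _ ⟨k, rfl⟩
  simp only [gaugeTransform, norm_mul]
  gcongr
  · exact (Real.le_sqrt (norm_nonneg _) (tsum_nonneg fun _ => sq_nonneg _)).mpr
      (hg.le_tsum k fun _ _ => sq_nonneg _)
  · exact norm_prod_Ico_le_exp_tsum hc k

lemma gaugeTransform_recurrence {l : ℂ} (hg0 : g 0 = 0)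
    (hrec : ∀ k, 1 ≤ k → a (k - 1) * g (k - 1) + b k * g k + c k * g (k + 1) = l * g k)
    (k : ℕ) :
    gaugeTransform c g k + gaugeTransform c g (k + 2) - l * gaugeTransform c g (k + 1) =
      (1 - a k * c k) * gaugeTransform c g k - b (k + 1) * gaugeTransform c g (k + 1) := by
  have h := hrec (k + 1) (by omega)
  rw [Nat.add_sub_cancel] at h
  have hlow : a k * g k * ∏ j ∈ Finset.Ico 1 (k + 1), c j = a k * c k * gaugeTransform c g k := by
    rcases k with _ | k
    · simp [gaugeTransform, hg0]
    · rw [Finset.prod_Ico_succ_top (by omega), gaugeTransform]; ring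
  simp only [gaugeTransform, Finset.prod_Ico_succ_top (by omega : 1 ≤ k + 1)] at hlow ⊢
  linear_combination (∏ j ∈ Finset.Ico 1 (k + 1), c j) * h - hlow

end Gauge

/-- Spectral enclosure in a Cassini oval (Theorem 0.3 (i)). -/
theorem stmt1 (a b c : ℕ → ℂ)
    (hnz : ∀ j : ℕ, 1 ≤ j → a j * c j ≠ 0)
    (hS : Summable (fun n : ℕ => ‖1 - a (n + 1)‖ + ‖b (n + 1)‖ + ‖1 - c (n + 1)‖))
    (l : ℂ) (hl : IsJacobiEigenvalue a b c l) (hout : l ∉ segC) :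
    ‖l ^ 2 - 4‖ ≤
      (2 * (∑' n : ℕ, (‖b (n + 1)‖ + ‖1 - a (n + 1) * c (n + 1)‖)) / Real.log 2) ^ 2 := by
  obtain ⟨g, hg0, hg, hgsum, hrec⟩ := hl
  obtain ⟨z, hz0, hz1, rfl⟩ := exists_norm_lt_one_add_inv_eq hout
  obtain ⟨hSa, hSb, hSc⟩ := summable_norm_of_summable_norm_add_add hS
  set Δ := ∑' n : ℕ, (‖b (n + 1)‖ + ‖1 - a (n + 1) * c (n + 1)‖)
  set f := gaugeTransform c g
  set M := ⨆ k, ‖f k‖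
  have hfM : ∀ k, ‖f k‖ ≤ M := le_ciSup (bddAbove_norm_gaugeTransform hgsum hSc)
  have hM : 0 < M := by
    obtain ⟨k, hk⟩ := Function.ne_iff.mp
      (gaugeTransform_ne_zero (fun j hj => right_ne_zero_of_mul (hnz j hj)) hg)
    exact (norm_pos_iff.mpr hk).trans_le (hfM k)
  obtain ⟨hρ, hρΔ⟩ := summable_norm_mul_sub_mul_succ_and_tsum_le (p := fun k => 1 - a k * c k)
    hfM (gaugeTransform_zero hg0) (summable_norm_one_sub_mul hSa hSc) hSb
  have hMΔ : M ≤ 2 / ‖z - z⁻¹‖ * (M * Δ) := ciSup_le fun k =>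
    (norm_le_of_perturbed_free_recurrence hz0 hz1 hfM (gaugeTransform_zero hg0) hρ
      (gaugeTransform_recurrence hg0 hrec) k).trans (by gcongr)
  have hq : ‖z - z⁻¹‖ ≤ 2 * Δ := by
    have := norm_pos_iff.mpr (sub_inv_ne_zero_of_norm_lt_one hz0 hz1)
    rw [div_mul_eq_mul_div, le_div_iff₀ this] at hMΔ
    nlinarith
  rw [show (z + z⁻¹) ^ 2 - 4 = (z - z⁻¹) ^ 2 by field_simp; ring, norm_pow]
  gcongr
  exact hq.trans (le_div_self (by positivity) (Real.log_pos one_lt_two)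
    (by linarith [Real.log_two_lt_d9]))
end
end

section
/- Let a, b, c : ℕ → ℂ (indexed from 1) satisfy a_j c_j ≠ 0 for all j and ∑_{n≥1}(|1 − a_n| + |b_n| + |1 − c_n|) < ∞. Then the Jacobi matrix J = J({a_j},{b_j},{c_j}) has no embedded eigenvalues: no real number λ with −2 < λ < 2 is an eigenvalue of J. -/
noncomputable section

/-!
Write `λ = p + q` with `p q = 1`, `‖p‖ = ‖q‖ = 1` and `p ≠ q`. For the free recurrence
`g (m + 2) = λ g (m + 1) - g m` the coordinates `g (m + 1) - q g m` and `g (m + 1) - p g m` are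
multiplied by `p` and `q` at each step, so the sum `T m` of their norms is conserved. For `J` the
perturbation can decrease `T` only by a summable relative amount:
`(1 - η m) T m ≤ (1 + η m) T (m + 1)` with `∑ η < ∞`. As `g ∈ ℓ²`, `T m → 0`, and this forces `T`,
hence `g`, to vanish on a tail; since `a j ≠ 0`, the recurrence carries this back down to `g = 0`.
-/

open Filter Topology Finset

lemma one_sub_sum_mul_le_of_step {S η : ℕ → ℝ} (hS : ∀ m, 0 ≤ S m) (hη : ∀ m, 0 ≤ η m)
    (hη1 : ∀ m, η m ≤ 1) (hstep : ∀ m, (1 - η m) * S m ≤ S (m + 1)) (n : ℕ) :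
    (1 - ∑ j ∈ range n, η j) * S 0 ≤ S n := by
  induction n with
  | zero => simp
  | succ n ih =>
    have hsum : 0 ≤ ∑ j ∈ range n, η j := sum_nonneg fun j _ => hη j
    calc (1 - ∑ j ∈ range (n + 1), η j) * S 0
        ≤ (1 - η n) * ((1 - ∑ j ∈ range n, η j) * S 0) := by
          rw [sum_range_succ]; nlinarith [mul_nonneg (mul_nonneg hsum (hη n)) (hS 0)]
      _ ≤ (1 - η n) * S n := mul_le_mul_of_nonneg_left ih (by linarith [hη1 n])
      _ ≤ S (n + 1) := hstep n

/- On a tail where `∑ η < 1 / 4`, `S` never drops below half its initial value, which is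
incompatible with `S → 0` unless that value is `0`. -/
lemma eventually_eq_zero_of_le_succ_add {S η : ℕ → ℝ} (hS : ∀ m, 0 ≤ S m) (hη : ∀ m, 0 ≤ η m)
    (hηsum : Summable η) (hlim : Tendsto S atTop (𝓝 0))
    (hstep : ∀ m, S m ≤ S (m + 1) + η m * (S m + S (m + 1))) :
    ∀ᶠ K in atTop, S K = 0 := by
  have hstep' : ∀ m, (1 - 2 * η m) * S m ≤ S (m + 1) := by
    intro m
    have h : 0 ≤ (1 + η m) * (S (m + 1) - (1 - 2 * η m) * S m) := by
      nlinarith [hstep m, mul_nonneg (mul_nonneg (hη m) (hη m)) (hS m)]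
    linarith [nonneg_of_mul_nonneg_right h (by linarith [hη m])]
  filter_upwards [(tendsto_sum_nat_add η).eventually (gt_mem_nhds (by norm_num : (0:ℝ) < 1 / 4))]
    with K hK
  have htail : Summable (fun j => η (j + K)) := (summable_nat_add_iff K).2 hηsum
  have hbound (n : ℕ) : (1 / 2) * S K ≤ S (n + K) := by
    have h := one_sub_sum_mul_le_of_step (S := fun j => S (j + K)) (η := fun j => 2 * η (j + K))
      (fun j => hS _) (fun j => by linarith [hη (j + K)])
      (fun j => by linarith [htail.le_tsum j fun i _ => hη (i + K)])
      (fun j => by simpa [add_right_comm] using hstep' (j + K)) n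
    have hpartial : ∑ j ∈ range n, η (j + K) ≤ ∑' j, η (j + K) :=
      htail.sum_le_tsum _ fun i _ => hη (i + K)
    simp only [zero_add, ← mul_sum] at h
    nlinarith [hS K]
  have hlimK : Tendsto (fun n => S (n + K)) atTop (𝓝 0) := (tendsto_add_atTop_iff_nat K).2 hlim
  linarith [hS K, ge_of_tendsto' hlimK hbound]

/- The two terms are the coordinates of `(g m, g (m + 1))` in the eigenbasis of the free transfer
matrix, with eigenvalues `p` and `q`; for `‖p‖ = ‖q‖ = 1` both norms are conserved by the free
recurrence `g (m + 2) = (p + q) g (m + 1) - p q g m`. -/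
def transferNorm (p q : ℂ) (g : ℕ → ℂ) (m : ℕ) : ℝ :=
  ‖g (m + 1) - q * g m‖ + ‖g (m + 1) - p * g m‖

section transferNorm

variable {p q : ℂ} {g : ℕ → ℂ}

lemma transferNorm_nonneg (m : ℕ) : 0 ≤ transferNorm p q g m := by
  unfold transferNorm; positivity

lemma norm_sub_mul_norm_le_transferNorm (hp : ‖p‖ = 1) (hq : ‖q‖ = 1) (m : ℕ) :
    ‖p - q‖ * ‖g m‖ ≤ transferNorm p q g m ∧ ‖p - q‖ * ‖g (m + 1)‖ ≤ transferNorm p q g m := by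
  constructor
  · calc ‖p - q‖ * ‖g m‖ = ‖(g (m + 1) - q * g m) - (g (m + 1) - p * g m)‖ := by
          rw [← norm_mul]; ring_nf
      _ ≤ transferNorm p q g m := norm_sub_le _ _
  · calc ‖p - q‖ * ‖g (m + 1)‖ = ‖p * (g (m + 1) - q * g m) - q * (g (m + 1) - p * g m)‖ := by
          rw [← norm_mul]; ring_nf
      _ ≤ transferNorm p q g m := by
          refine (norm_sub_le _ _).trans_eq ?_
          rw [norm_mul, norm_mul, hp, hq, one_mul, one_mul, transferNorm]

lemma transferNorm_sub_le_succ (hp : ‖p‖ = 1) (hq : ‖q‖ = 1) {m : ℕ} {r : ℂ}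
    (hrec : g (m + 2) = (p + q) * g (m + 1) - p * q * g m + r) :
    transferNorm p q g m - 2 * ‖r‖ ≤ transferNorm p q g (m + 1) := by
  have hw : g (m + 2) - q * g (m + 1) = p * (g (m + 1) - q * g m) + r := by
    rw [hrec]; ring
  have hw' : g (m + 2) - p * g (m + 1) = q * (g (m + 1) - p * g m) + r := by
    rw [hrec]; ring
  have hrot (u w : ℂ) (hu : ‖u‖ = 1) : ‖w‖ ≤ ‖u * w + r‖ + ‖r‖ := by
    simpa [norm_mul, hu] using norm_sub_le (u * w + r) r
  have h1 := hrot p (g (m + 1) - q * g m) hp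
  have h2 := hrot q (g (m + 1) - p * g m) hq
  rw [← hw] at h1
  rw [← hw'] at h2
  simp only [transferNorm]
  linarith

lemma transferNorm_le_succ_add (hp : ‖p‖ = 1) (hq : ‖q‖ = 1) (hpq : p ≠ q) {m : ℕ} {r : ℂ}
    {ε : ℝ} (hε : 0 ≤ ε) (hrec : g (m + 2) = (p + q) * g (m + 1) - p * q * g m + r)
    (hr : ‖r‖ ≤ ε * (‖g m‖ + ‖g (m + 1)‖ + ‖g (m + 2)‖)) :
    transferNorm p q g m ≤ transferNorm p q g (m + 1) +
      4 / ‖p - q‖ * ε * (transferNorm p q g m + transferNorm p q g (m + 1)) := by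
  have hδ : 0 < ‖p - q‖ := norm_pos_iff.2 (sub_ne_zero.2 hpq)
  obtain ⟨h0, h1⟩ := norm_sub_mul_norm_le_transferNorm (g := g) hp hq m
  have h2 := (norm_sub_mul_norm_le_transferNorm (g := g) hp hq (m + 1)).2
  have hr' : 2 * ‖r‖ ≤ 4 / ‖p - q‖ * ε * (transferNorm p q g m + transferNorm p q g (m + 1)) := by
    rw [div_mul_eq_mul_div, div_mul_eq_mul_div, le_div_iff₀ hδ]
    have hsum : ‖p - q‖ * (‖g m‖ + ‖g (m + 1)‖ + ‖g (m + 2)‖) ≤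
        2 * (transferNorm p q g m + transferNorm p q g (m + 1)) := by
      rw [mul_add, mul_add]
      linarith [transferNorm_nonneg (p := p) (q := q) (g := g) (m + 1)]
    nlinarith [mul_le_mul_of_nonneg_left hsum hε]
  linarith [transferNorm_sub_le_succ hp hq hrec]

lemma eq_zero_of_transferNorm_eq_zero (hp : ‖p‖ = 1) (hq : ‖q‖ = 1) (hpq : p ≠ q) {m : ℕ}
    (h : transferNorm p q g m = 0) : g m = 0 := by
  have h0 := (norm_sub_mul_norm_le_transferNorm (g := g) hp hq m).1
  rw [h] at h0
  simpa [sub_eq_zero, hpq] using le_antisymm h0 (by positivity)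

lemma tendsto_transferNorm_zero (hg : Tendsto g atTop (𝓝 0)) :
    Tendsto (transferNorm p q g) atTop (𝓝 0) := by
  have hg1 := hg.comp (tendsto_add_atTop_nat 1)
  have h := (hg1.sub (hg.const_mul q)).norm.add (hg1.sub (hg.const_mul p)).norm
  simp only [mul_zero, sub_zero, norm_zero, add_zero] at h
  exact h

end transferNorm

lemma tendsto_zero_of_summable_norm_sq {g : ℕ → ℂ} (hg : Summable fun k => ‖g k‖ ^ 2) :
    Tendsto g atTop (𝓝 0) := by
  rw [tendsto_zero_iff_norm_tendsto_zero]
  simpa [Real.sqrt_sq (norm_nonneg _)] using hg.tendsto_atTop_zero.sqrt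

lemma exists_roots_norm_eq_one_of_abs_lt_two {x : ℝ} (hx1 : -2 < x) (hx2 : x < 2) :
    ∃ p q : ℂ, ‖p‖ = 1 ∧ ‖q‖ = 1 ∧ p ≠ q ∧ p + q = x ∧ p * q = 1 := by
  set s := Real.sqrt (1 - x ^ 2 / 4)
  have hs : s ^ 2 = 1 - x ^ 2 / 4 := Real.sq_sqrt (by nlinarith)
  have hs0 : 0 < s := Real.sqrt_pos.2 (by nlinarith)
  have hnorm (t : ℝ) (ht : t ^ 2 = s ^ 2) : ‖(⟨x / 2, t⟩ : ℂ)‖ = 1 := by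
    rw [Complex.norm_eq_sqrt_sq_add_sq, ht, hs, ← Real.sqrt_one]
    congr 1
    ring
  refine ⟨⟨x / 2, s⟩, ⟨x / 2, -s⟩, hnorm s rfl, hnorm (-s) (neg_sq s), ?_, ?_, ?_⟩
  · intro h
    have := congrArg Complex.im h
    simp only at this
    linarith
  · apply Complex.ext <;> simp
  · apply Complex.ext <;> simp <;> nlinarith

section Jacobi

variable {a b c g : ℕ → ℂ} {l : ℂ}

/-- Row `m + 1` of `(J₀ - J) g`, where `J₀` is the free Jacobi matrix (`a = c = 1`, `b = 0`). -/
def jacobiResidual (a b c g : ℕ → ℂ) (m : ℕ) : ℂ :=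
  (1 - a m) * g m - b (m + 1) * g (m + 1) + (1 - c (m + 1)) * g (m + 2)

lemma eq_free_add_jacobiResidual
    (heq : ∀ k : ℕ, 1 ≤ k → a (k - 1) * g (k - 1) + b k * g k + c k * g (k + 1) = l * g k)
    (m : ℕ) : g (m + 2) = l * g (m + 1) - g m + jacobiResidual a b c g m := by
  have h := heq (m + 1) (Nat.le_add_left 1 m)
  rw [Nat.add_sub_cancel] at h
  rw [jacobiResidual]
  linear_combination h

lemma norm_jacobiResidual_le (m : ℕ) :
    ‖jacobiResidual a b c g m‖ ≤ (‖1 - a m‖ + ‖b (m + 1)‖ + ‖1 - c (m + 1)‖) *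
      (‖g m‖ + ‖g (m + 1)‖ + ‖g (m + 2)‖) := by
  calc ‖jacobiResidual a b c g m‖
      ≤ ‖1 - a m‖ * ‖g m‖ + ‖b (m + 1)‖ * ‖g (m + 1)‖ + ‖1 - c (m + 1)‖ * ‖g (m + 2)‖ := by
        rw [← norm_mul, ← norm_mul, ← norm_mul]
        exact (norm_add_le _ _).trans (by gcongr; exact norm_sub_le _ _)
    _ ≤ _ := by
        nlinarith [norm_nonneg (1 - a m), norm_nonneg (b (m + 1)), norm_nonneg (1 - c (m + 1)),
          norm_nonneg (g m), norm_nonneg (g (m + 1)), norm_nonneg (g (m + 2))]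

lemma eq_zero_of_eventually_eq_zero (ha : ∀ j : ℕ, 1 ≤ j → a j ≠ 0) (hg0 : g 0 = 0)
    (heq : ∀ k : ℕ, 1 ≤ k → a (k - 1) * g (k - 1) + b k * g k + c k * g (k + 1) = l * g k)
    (hev : ∀ᶠ n in atTop, g n = 0) : g = 0 := by
  obtain ⟨N, hN⟩ := eventually_atTop.1 hev
  induction N with
  | zero => exact funext fun n => hN n n.zero_le
  | succ n ih =>
    refine ih fun m hm => ?_
    rcases hm.eq_or_lt with rfl | hlt
    · rcases Nat.eq_zero_or_pos n with rfl | hn0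
      · exact hg0
      · have h := heq (n + 1) (Nat.le_add_left 1 n)
        rw [Nat.add_sub_cancel, hN (n + 1) le_rfl, hN (n + 1 + 1) (by omega)] at h
        simpa [ha n hn0] using h
    · exact hN m hlt

lemma summable_perturbation_of_summable_succ
    (hS : Summable (fun n : ℕ => ‖1 - a (n + 1)‖ + ‖b (n + 1)‖ + ‖1 - c (n + 1)‖)) :
    Summable (fun m : ℕ => ‖1 - a m‖ + ‖b (m + 1)‖ + ‖1 - c (m + 1)‖) := by
  have hle (n : ℕ) : ‖1 - a (n + 1)‖ ≤ ‖1 - a (n + 1)‖ + ‖b (n + 1)‖ + ‖1 - c (n + 1)‖ ∧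
      ‖b (n + 1)‖ ≤ ‖1 - a (n + 1)‖ + ‖b (n + 1)‖ + ‖1 - c (n + 1)‖ ∧
      ‖1 - c (n + 1)‖ ≤ ‖1 - a (n + 1)‖ + ‖b (n + 1)‖ + ‖1 - c (n + 1)‖ := by
    refine ⟨?_, ?_, ?_⟩ <;>
      linarith [norm_nonneg (1 - a (n + 1)), norm_nonneg (b (n + 1)), norm_nonneg (1 - c (n + 1))]
  have ha : Summable fun n => ‖1 - a (n + 1)‖ :=
    hS.of_nonneg_of_le (fun _ => norm_nonneg _) fun n => (hle n).1
  have hb : Summable fun n => ‖b (n + 1)‖ :=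
    hS.of_nonneg_of_le (fun _ => norm_nonneg _) fun n => (hle n).2.1
  have hc : Summable fun n => ‖1 - c (n + 1)‖ :=
    hS.of_nonneg_of_le (fun _ => norm_nonneg _) fun n => (hle n).2.2
  exact (((summable_nat_add_iff (f := fun m => ‖1 - a m‖) 1).1 ha).add hb).add hc

end Jacobi

/-- Absence of embedded eigenvalues (Corollary 2.3): for a trace class perturbation
of the free half-line Jacobi matrix, no `λ ∈ (-2,2)` is an eigenvalue. -/
theorem stmt3 (a b c : ℕ → ℂ)
    (hnz : ∀ j : ℕ, 1 ≤ j → a j * c j ≠ 0)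
    (hS : Summable (fun n : ℕ => ‖1 - a (n + 1)‖ + ‖b (n + 1)‖ + ‖1 - c (n + 1)‖)) :
    ∀ x : ℝ, -2 < x → x < 2 → ¬ IsJacobiEigenvalue a b c (x : ℂ) := by
  rintro x hx1 hx2 ⟨g, hg0, hgne, hgsum, heq⟩
  obtain ⟨p, q, hp, hq, hpq, hsum, hprod⟩ := exists_roots_norm_eq_one_of_abs_lt_two hx1 hx2
  set ε : ℕ → ℝ := fun m => ‖1 - a m‖ + ‖b (m + 1)‖ + ‖1 - c (m + 1)‖
  have hε : ∀ m, 0 ≤ ε m := fun m => by positivity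
  have hstep (m : ℕ) := transferNorm_le_succ_add (g := g) hp hq hpq (hε m)
    (by rw [hsum, hprod, one_mul]; exact eq_free_add_jacobiResidual heq m)
    (norm_jacobiResidual_le m)
  have hvanish := eventually_eq_zero_of_le_succ_add transferNorm_nonneg
    (fun m => by positivity) ((summable_perturbation_of_summable_succ hS).mul_left (4 / ‖p - q‖))
    (tendsto_transferNorm_zero (tendsto_zero_of_summable_norm_sq hgsum)) hstep
  have ha (j : ℕ) (hj : 1 ≤ j) : a j ≠ 0 := left_ne_zero_of_mul (hnz j hj)
  refine hgne (eq_zero_of_eventually_eq_zero ha hg0 heq ?_)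
  filter_upwards [hvanish] with n hn
  exact eq_zero_of_transferNorm_eq_zero hp hq hpq hn
end
end

section
/- Let a, b, c : ℕ → ℂ (indexed from 1, with the convention a_0 = c_0 = 1) satisfy ∑_{m≥1} δ_m < ∞, where δ_m := |b_m| + |1 − a_{m−1} c_{m−1}|, and a_n c_n → 1 as n → ∞. Fix z with 0 < |z| < 1 and let u = (u_k)_{k≥0} be a sequence of complex numbers satisfying the three-term recurrence u_{k−1} + b_k u_k + a_k c_k u_{k+1} = (z + 1/z) u_k for all k ≥ 1 together with the Jost normalization z^{−k} u_k → 1 as k → ∞. Then for every k ≥ 0 the series ∑_{m=k+1}^∞ T(k,m;z) u_m converges absolutely and u_k = z^k + ∑_{m=k+1}^∞ T(k,m;z) u_m. -/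
/-!
Summation by parts. Since `G(k,·;z)` solves the free recurrence `G(m) + G(m+2) = (z + 1/z) G(m+1)`
with `G(k,k) = 0`, `G(k,k+1) = 1`, and `u` solves the perturbed one, the partial sum
`∑_{m=k+1}^{n} T(k,m;z) u_m` telescopes to `u_k - (u_n G(k,n+1) - a_n c_n u_{n+1} G(k,n))`.
Writing `u_n = z^n w_n` with `w_n → 1`, the boundary term tends to `z^k`. Absolute convergence comes
from `|G(k,m;z)| ≲ |z|^{k-m}` and `|u_m| ≲ |z|^m`, which leave `|T(k,m;z) u_m| ≲ δ_m`.
-/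

noncomputable section

/-- The Green kernel `G(k,m;z) = (z^{m-k} - z^{k-m})/(z - z⁻¹)` for `m ≥ k`,
and `G(k,m;z) = 0` for `m < k` (both expressions vanish at `m = k`). -/
def greenG (z : ℂ) (k m : ℤ) : ℂ :=
  if k ≤ m then (z ^ (m - k) - z ^ (k - m)) / (z - z⁻¹) else 0

/-- The kernel `T(k,m;z) = -b_m G(k,m;z) + (1 - a_{m-1} c_{m-1}) G(k,m-1;z)`,
for sequences `a, b, c` indexed from 1 (with the convention `a 0 = c 0 = 1`). -/
def kerT (a b c : ℕ → ℂ) (z : ℂ) (k m : ℕ) : ℂ :=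
  -(b m) * greenG z k m + (1 - a (m - 1) * c (m - 1)) * greenG z k ((m : ℤ) - 1)

open Filter Topology

section Green

variable {z : ℂ}

theorem sub_inv_ne_zero_of_norm_ne_one (hz0 : z ≠ 0) (hz1 : ‖z‖ ≠ 1) : z - z⁻¹ ≠ 0 := by
  intro h
  have hzz : z * z = 1 := by rw [← mul_inv_cancel₀ hz0, ← sub_eq_zero.mp h]
  have hnorm : ‖z‖ * ‖z‖ = 1 := by rw [← norm_mul, hzz, norm_one]
  exact hz1 (by nlinarith [norm_nonneg z])

theorem greenG_self (z : ℂ) (k : ℤ) : greenG z k k = 0 := by simp [greenG]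

theorem greenG_add_one_self (hD : z - z⁻¹ ≠ 0) (k : ℤ) : greenG z k (k + 1) = 1 := by
  simp only [greenG, if_pos (by omega : k ≤ k + 1), add_sub_cancel_left, sub_add_cancel_left,
    zpow_one, zpow_neg_one]
  exact div_self hD

theorem greenG_add_greenG_add_two (hz0 : z ≠ 0) {k m : ℤ} (h : k ≤ m) :
    greenG z k m + greenG z k (m + 2) = (z + 1 / z) * greenG z k (m + 1) := by
  simp only [greenG, if_pos h, if_pos (by omega : k ≤ m + 2), if_pos (by omega : k ≤ m + 1)]
  rw [show m + 2 - k = m - k + 1 + 1 by ring, show k - (m + 2) = k - m + -1 + -1 by ring,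
    show m + 1 - k = m - k + 1 by ring, show k - (m + 1) = k - m + -1 by ring]
  simp only [zpow_add₀ hz0, zpow_one, zpow_neg_one]
  field_simp
  ring

theorem norm_greenG_le (hz0 : z ≠ 0) (hz1 : ‖z‖ ≤ 1) (k m : ℤ) :
    ‖greenG z k m‖ ≤ 2 * ‖z‖ ^ (k - m) / ‖z - z⁻¹‖ := by
  unfold greenG
  split_ifs with h
  · have hle : ‖z‖ ^ (m - k) ≤ ‖z‖ ^ (k - m) :=
      zpow_le_zpow_right_of_le_one₀ (norm_pos_iff.mpr hz0) hz1 (by omega)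
    rw [norm_div]
    gcongr
    calc ‖z ^ (m - k) - z ^ (k - m)‖ ≤ ‖z‖ ^ (m - k) + ‖z‖ ^ (k - m) := by
          rw [← norm_zpow, ← norm_zpow]; exact norm_sub_le _ _
      _ ≤ 2 * ‖z‖ ^ (k - m) := by linarith
  · rw [norm_zero]
    positivity

/-- `u_n G(k, n + j; z) = (u_n / z^n) (z^{2n+j-k} - z^{k-j}) / (z - z⁻¹)` once `n + j ≥ k`. -/
theorem tendsto_mul_greenG (hz0 : z ≠ 0) (hz1 : ‖z‖ < 1) {u : ℕ → ℂ} {l : ℂ}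
    (hu : Tendsto (fun n : ℕ => u n / z ^ n) atTop (𝓝 l)) (k j : ℤ) :
    Tendsto (fun n : ℕ => u n * greenG z k (n + j)) atTop
      (𝓝 (-(l * z ^ (k - j)) / (z - z⁻¹))) := by
  have hsq : Tendsto (fun n : ℕ => (z ^ 2) ^ n) atTop (𝓝 0) :=
    tendsto_pow_atTop_nhds_zero_of_norm_lt_one (by rw [norm_pow]; nlinarith [norm_nonneg z])
  have hlim := (hu.mul ((hsq.const_mul (z ^ (j - k))).sub_const (z ^ (k - j)))).div_const (z - z⁻¹)
  rw [mul_zero, zero_sub, mul_neg] at hlim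
  refine hlim.congr' ?_
  filter_upwards [eventually_ge_atTop (k - j).toNat] with n hn
  rw [greenG, if_pos (by omega), show (n : ℤ) + j - k = (j - k) + n by ring,
    show k - ((n : ℤ) + j) = (k - j) - n by ring, zpow_add₀ hz0 (j - k), zpow_sub₀ hz0 (k - j),
    zpow_natCast]
  field_simp
  ring

end Green

section Kernel

variable {a b c : ℕ → ℂ} {z : ℂ}

theorem norm_kerT_le (hz0 : z ≠ 0) (hz1 : ‖z‖ ≤ 1) (k m : ℕ) :
    ‖kerT a b c z k m‖ ≤
      2 * ‖z‖ ^ ((k : ℤ) - m) / ‖z - z⁻¹‖ * (‖b m‖ + ‖1 - a (m - 1) * c (m - 1)‖) := by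
  have hG₁ := norm_greenG_le hz0 hz1 k m
  have hG₂ : ‖greenG z k ((m : ℤ) - 1)‖ ≤ 2 * ‖z‖ ^ ((k : ℤ) - m) / ‖z - z⁻¹‖ := by
    refine (norm_greenG_le hz0 hz1 _ _).trans ?_
    gcongr 2 * ?_ / _
    exact zpow_le_zpow_right_of_le_one₀ (norm_pos_iff.mpr hz0) hz1 (by omega)
  calc ‖kerT a b c z k m‖
      ≤ ‖b m‖ * ‖greenG z k m‖ + ‖1 - a (m - 1) * c (m - 1)‖ * ‖greenG z k ((m : ℤ) - 1)‖ := by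
        rw [kerT, ← norm_neg (b m), ← norm_mul, ← norm_mul]; exact norm_add_le _ _
    _ ≤ _ := by nlinarith [norm_nonneg (b m), norm_nonneg (1 - a (m - 1) * c (m - 1))]

theorem exists_norm_le_mul_pow_of_tendsto (hz0 : z ≠ 0) {u : ℕ → ℂ} {l : ℂ}
    (hu : Tendsto (fun n : ℕ => u n / z ^ n) atTop (𝓝 l)) : ∃ C, ∀ n, ‖u n‖ ≤ C * ‖z‖ ^ n := by
  obtain ⟨C, hC⟩ := hu.norm.bddAbove_range
  refine ⟨C, fun n => ?_⟩
  have hun : ‖u n‖ = ‖u n / z ^ n‖ * ‖z‖ ^ n := by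
    rw [norm_div, norm_pow, div_mul_cancel₀ _ (pow_ne_zero n (norm_ne_zero_iff.mpr hz0))]
  rw [hun]
  gcongr
  exact hC ⟨n, rfl⟩

theorem summable_norm_kerT_mul (hz0 : z ≠ 0) (hz1 : ‖z‖ ≤ 1)
    (hδ : Summable (fun m : ℕ => ‖b (m + 1)‖ + ‖1 - a m * c m‖))
    {u : ℕ → ℂ} {C : ℝ} (hu : ∀ n, ‖u n‖ ≤ C * ‖z‖ ^ n) (k : ℕ) :
    Summable (fun m : ℕ => ‖kerT a b c z k (m + k + 1) * u (m + k + 1)‖) := by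
  refine Summable.of_nonneg_of_le (fun _ => norm_nonneg _) (fun m => ?_)
    (((summable_nat_add_iff k).mpr hδ).mul_left (2 * C * ‖z‖ ^ k / ‖z - z⁻¹‖))
  have hpow : ‖z‖ ^ ((k : ℤ) - (m + k + 1 : ℕ)) * ‖z‖ ^ (m + k + 1) = ‖z‖ ^ k := by
    rw [← zpow_natCast _ (m + k + 1), ← zpow_add₀ (norm_ne_zero_iff.mpr hz0), ← zpow_natCast]
    congr 1
    push_cast
    ring
  calc ‖kerT a b c z k (m + k + 1) * u (m + k + 1)‖
      ≤ 2 * ‖z‖ ^ ((k : ℤ) - (m + k + 1 : ℕ)) / ‖z - z⁻¹‖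
          * (‖b (m + k + 1)‖ + ‖1 - a (m + k) * c (m + k)‖) * (C * ‖z‖ ^ (m + k + 1)) := by
        rw [norm_mul]
        exact mul_le_mul (norm_kerT_le hz0 hz1 k _) (hu _) (norm_nonneg _) (by positivity)
    _ = _ := by rw [← hpow]; ring

theorem sum_kerT_mul_eq (hz0 : z ≠ 0) (hD : z - z⁻¹ ≠ 0) {u : ℕ → ℂ}
    (hrec : ∀ k : ℕ, 1 ≤ k →
      u (k - 1) + b k * u k + a k * c k * u (k + 1) = (z + 1 / z) * u k) (k n : ℕ) :
    ∑ j ∈ Finset.range n, kerT a b c z k (j + k + 1) * u (j + k + 1) =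
      u k - (u (n + k) * greenG z k ((n + k : ℕ) + 1)
        - a (n + k) * c (n + k) * u (n + k + 1) * greenG z k (n + k : ℕ)) := by
  induction n with
  | zero => simp [greenG_add_one_self hD, greenG_self]
  | succ n ih =>
    have hu := hrec (n + k + 1) (by omega)
    have hG := greenG_add_greenG_add_two hz0 (k := k) (m := (n + k : ℕ)) (by omega)
    rw [Finset.sum_range_succ, ih, kerT]
    simp only [Nat.add_sub_cancel] at hu ⊢
    rw [show n + 1 + k = n + k + 1 by ring, show ((n + k + 1 : ℕ) : ℤ) - 1 = (n + k : ℕ) by omega,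
      show ((n + k + 1 : ℕ) : ℤ) + 1 = (n + k : ℕ) + 2 by omega,
      show ((n + k + 1 : ℕ) : ℤ) = (n + k : ℕ) + 1 by omega]
    linear_combination (-greenG z k ((n + k : ℕ) + 1)) * hu + u (n + k + 1) * hG

theorem tendsto_boundary_term (hz0 : z ≠ 0) (hz1 : ‖z‖ < 1) {u : ℕ → ℂ}
    (hac : Tendsto (fun n : ℕ => a n * c n) atTop (𝓝 1))
    (hu : Tendsto (fun n : ℕ => u n / z ^ n) atTop (𝓝 1)) (k : ℕ) :
    Tendsto (fun n : ℕ => u n * greenG z k (n + 1) - a n * c n * u (n + 1) * greenG z k n)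
      atTop (𝓝 (z ^ k)) := by
  have hD := sub_inv_ne_zero_of_norm_ne_one hz0 hz1.ne
  have hu₁ : Tendsto (fun n : ℕ => u (n + 1) / z ^ n) atTop (𝓝 z) := by
    have h := (hu.comp (tendsto_add_atTop_nat 1)).mul_const z
    rw [one_mul] at h
    refine h.congr fun n => ?_
    simp only [Function.comp_apply, pow_succ]
    field_simp
  have h₀ := tendsto_mul_greenG hz0 hz1 hu k 1
  have h₁ := hac.mul (tendsto_mul_greenG hz0 hz1 hu₁ k 0)
  convert h₀.sub h₁ using 1
  · simp only [add_zero, mul_assoc]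
  · simp only [sub_zero, one_mul, zpow_natCast, zpow_sub_one₀ hz0]
    rw [← sub_div]
    congr 1
    rw [eq_div_iff hD]
    ring

end Kernel

theorem stmt5_general (a b c : ℕ → ℂ)
    (hδ : Summable (fun m : ℕ => ‖b (m + 1)‖ + ‖1 - a m * c m‖))
    (hac : Filter.Tendsto (fun n : ℕ => a n * c n) Filter.atTop (nhds 1))
    (z : ℂ) (hz0 : z ≠ 0) (hz1 : ‖z‖ < 1)
    (u : ℕ → ℂ)
    (hrec : ∀ k : ℕ, 1 ≤ k →
      u (k - 1) + b k * u k + a k * c k * u (k + 1) = (z + 1 / z) * u k)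
    (hjost : Filter.Tendsto (fun k : ℕ => u k / z ^ k) Filter.atTop (nhds 1)) :
    ∀ k : ℕ,
      Summable (fun m : ℕ => ‖kerT a b c z k (m + k + 1) * u (m + k + 1)‖) ∧
      u k = z ^ k + ∑' m : ℕ, kerT a b c z k (m + k + 1) * u (m + k + 1) := by
  intro k
  obtain ⟨C, hC⟩ := exists_norm_le_mul_pow_of_tendsto hz0 hjost
  have hsum := summable_norm_kerT_mul hz0 hz1.le hδ hC k
  have hpartial : Tendsto
      (fun n => ∑ j ∈ Finset.range n, kerT a b c z k (j + k + 1) * u (j + k + 1))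
      atTop (𝓝 (u k - z ^ k)) := by
    simp only [sum_kerT_mul_eq hz0 (sub_inv_ne_zero_of_norm_ne_one hz0 hz1.ne) hrec]
    refine tendsto_const_nhds.sub ?_
    convert (tendsto_boundary_term hz0 hz1 hac hjost k).comp (tendsto_add_atTop_nat k) using 2
    simp only [Function.comp_apply, Nat.cast_add]
  rw [((hasSum_iff_tendsto_nat_of_summable_norm hsum).mpr hpartial).tsum_eq]
  exact ⟨hsum, by ring⟩

/-- The Jost solution satisfies the discrete Volterra-type equation (Theorem 1.1, direct
direction): if `u` solves the three-term recurrence with Jost normalization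
`z^{-k} u_k → 1`, then `u_k = z^k + ∑_{m=k+1}^∞ T(k,m;z) u_m`, the series converging
absolutely. Here `δ_m = |b_m| + |1 - a_{m-1} c_{m-1}|` is summable and `a_n c_n → 1`. -/
theorem stmt5 (a b c : ℕ → ℂ) (ha0 : a 0 = 1) (hc0 : c 0 = 1)
    (hδ : Summable (fun m : ℕ => ‖b (m + 1)‖ + ‖1 - a m * c m‖))
    (hac : Filter.Tendsto (fun n : ℕ => a n * c n) Filter.atTop (nhds 1))
    (z : ℂ) (hz0 : z ≠ 0) (hz1 : ‖z‖ < 1)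
    (u : ℕ → ℂ)
    (hrec : ∀ k : ℕ, 1 ≤ k →
      u (k - 1) + b k * u k + a k * c k * u (k + 1) = (z + 1 / z) * u k)
    (hjost : Filter.Tendsto (fun k : ℕ => u k / z ^ k) Filter.atTop (nhds 1)) :
    ∀ k : ℕ,
      Summable (fun m : ℕ => ‖kerT a b c z k (m + k + 1) * u (m + k + 1)‖) ∧
      u k = z ^ k + ∑' m : ℕ, kerT a b c z k (m + k + 1) * u (m + k + 1) :=
  stmt5_general a b c hδ hac z hz0 hz1 u hrec hjost
end
end

section
/- Let a, b, c : ℕ → ℂ (indexed from 1, with the convention a_0 = c_0 = 1) satisfy Δ := ∑_{m≥1} δ_m < ∞, where δ_m := |b_m| + |1 − a_{m−1} c_{m−1}|, and set s₀(k) := ∑_{n=k+1}^∞ δ_n and ω(z) := 2z/(1 − z²). Then there exists a family of functions u_k⁺ : ℂ → ℂ (k ≥ 0) such that: (i) each u_k⁺ is analytic on the open unit disk and continuous on the closed unit disk minus the two points ±1; (ii) for every z in the closed unit disk with z ∉ {0, 1, −1} and every k ≥ 0, the series ∑_{m=k+1}^∞ T(k,m;z) u_m⁺(z) converges absolutely and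 u_k⁺(z) = z^k + ∑_{m=k+1}^∞ T(k,m;z) u_m⁺(z); (iii) for every z in the closed unit disk with z ≠ ±1 and every k ≥ 0, |u_k⁺(z) − z^k| ≤ |z|^k (exp(|ω(z)| s₀(k)) − 1). -/
/-!
Writing `u_k = z^k v_k`, the equation becomes `v_k = 1 + ∑_j K_{k,j}(z) v_{j+k+1}` with a kernel
that is polynomial in `z`, because `z^{m-k} G(k,m;z) = z (1 - z^{2(m-k)}) / (1 - z²)`; on the closed
disk `|K_{k,j}(z)| ≤ |ω(z)| δ_{j+k+1}`. Solving by Picard iteration, the `n`-th iterate is at most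
`(|ω(z)| s₀(k))^n / n!`, since `∑_j δ_j s₀(j)^n` is a Riemann sum for `∫ t^n dt`. These bounds are
locally uniform on the closed disk minus `±1`, where the iterates are continuous (and holomorphic
inside), so their sum inherits both properties, solves the equation (by Fubini) and satisfies
`|v_k - 1| ≤ e^{|ω(z)| s₀(k)} - 1`.
-/

noncomputable section

open Finset Filter Topology Metric
open scoped Nat

namespace JostSolution

section TailSum

variable {f : ℕ → ℝ}

def tailSum (f : ℕ → ℝ) (k : ℕ) : ℝ := ∑' n, f (n + k)

lemma tailSum_nonneg (hf0 : ∀ n, 0 ≤ f n) (k : ℕ) : 0 ≤ tailSum f k :=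
  tsum_nonneg fun n => hf0 (n + k)

lemma tailSum_le_tsum (hf0 : ∀ n, 0 ≤ f n) (hf : Summable f) (k : ℕ) :
    tailSum f k ≤ ∑' n, f n := by
  rw [← hf.sum_add_tsum_nat_add k]
  exact le_add_of_nonneg_left (sum_nonneg fun i _ => hf0 i)

lemma tailSum_eq_add_tailSum_succ (hf : Summable f) (k : ℕ) :
    tailSum f k = f k + tailSum f (k + 1) := by
  rw [tailSum, ((summable_nat_add_iff k).2 hf).tsum_eq_zero_add, zero_add, tailSum]
  congr 1
  exact tsum_congr fun n => congrArg f (by omega)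

lemma pow_succ_add_mul_le_add_pow_succ {x y : ℝ} (hx : 0 ≤ x) (hy : 0 ≤ y) (n : ℕ) :
    x ^ (n + 1) + (n + 1) * x ^ n * y ≤ (x + y) ^ (n + 1) := by
  induction n with
  | zero => simp
  | succ n ih =>
    push_cast
    calc x ^ (n + 1 + 1) + (n + 1 + 1) * x ^ (n + 1) * y
        ≤ (x + y) * (x ^ (n + 1) + (n + 1) * x ^ n * y) := by
          have h : (x + y) * (x ^ (n + 1) + (n + 1) * x ^ n * y)
              = x ^ (n + 1 + 1) + (n + 1 + 1) * x ^ (n + 1) * y + (n + 1) * x ^ n * y ^ 2 := by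
            ring
          rw [h]
          exact le_add_of_nonneg_right (by positivity)
      _ ≤ (x + y) * (x + y) ^ (n + 1) := by gcongr
      _ = (x + y) ^ (n + 1 + 1) := by ring

/-- The sum is a Riemann sum for `∫₀^{s_k} t^n dt`. -/
lemma tsum_mul_tailSum_pow_le (hf0 : ∀ n, 0 ≤ f n) (hf : Summable f) (n k : ℕ) :
    ∑' j, f (j + k) * tailSum f (j + k + 1) ^ n ≤ tailSum f k ^ (n + 1) / (n + 1) := by
  set g : ℕ → ℝ := fun j => tailSum f (j + k) ^ (n + 1) / (n + 1)
  have hstep : ∀ j, f (j + k) * tailSum f (j + k + 1) ^ n ≤ g j - g (j + 1) := by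
    intro j
    have h := pow_succ_add_mul_le_add_pow_succ (tailSum_nonneg hf0 (j + k + 1)) (hf0 (j + k)) n
    rw [add_comm (tailSum f _), ← tailSum_eq_add_tailSum_succ hf] at h
    simp only [g, add_right_comm j 1 k, ← sub_div, le_div_iff₀ (by positivity : (0 : ℝ) < n + 1)]
    linarith
  refine Real.tsum_le_of_sum_range_le
    (fun j => mul_nonneg (hf0 _) (pow_nonneg (tailSum_nonneg hf0 _) _)) fun N => ?_
  calc ∑ j ∈ range N, f (j + k) * tailSum f (j + k + 1) ^ n
      ≤ ∑ j ∈ range N, (g j - g (j + 1)) := sum_le_sum fun j _ => hstep j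
    _ = g 0 - g N := sum_range_sub' g N
    _ ≤ g 0 := sub_le_self _ (by have := tailSum_nonneg hf0 (N + k); positivity)
    _ = tailSum f k ^ (n + 1) / (n + 1) := by simp only [g, zero_add]

end TailSum

section Picard

/-- Picard iterates for the equation `v k = 1 + ∑' j, K k j * v (j + k + 1)`. -/
def picardIter (K : ℕ → ℕ → ℂ) : ℕ → ℕ → ℂ
  | 0, _ => 1
  | n + 1, k => ∑' j, K k j * picardIter K n (j + k + 1)

@[simp] lemma picardIter_zero (K : ℕ → ℕ → ℂ) (k : ℕ) : picardIter K 0 k = 1 := rfl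

lemma picardIter_succ (K : ℕ → ℕ → ℂ) (n k : ℕ) :
    picardIter K (n + 1) k = ∑' j, K k j * picardIter K n (j + k + 1) := rfl

def volterraSol (K : ℕ → ℕ → ℂ) (k : ℕ) : ℂ := ∑' n, picardIter K n k

variable {K : ℕ → ℕ → ℂ} {f : ℕ → ℝ} {w : ℝ}
  (hf0 : ∀ n, 0 ≤ f n) (hf : Summable f) (hw : 0 ≤ w) (hK : ∀ k j, ‖K k j‖ ≤ w * f (j + k))
include hf0 hf hw hK

lemma norm_picardIter_le (n k : ℕ) :
    ‖picardIter K n k‖ ≤ (w * tailSum f k) ^ n / n ! := by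
  induction n generalizing k with
  | zero => simp
  | succ n ih =>
    set C := w ^ (n + 1) / (n ! : ℝ)
    have hterm : ∀ j, ‖K k j * picardIter K n (j + k + 1)‖
        ≤ C * (f (j + k) * tailSum f (j + k + 1) ^ n) := fun j => by
      rw [norm_mul]
      calc ‖K k j‖ * ‖picardIter K n (j + k + 1)‖
          ≤ (w * f (j + k)) * ((w * tailSum f (j + k + 1)) ^ n / n !) :=
            mul_le_mul (hK k j) (ih _) (norm_nonneg _) (mul_nonneg hw (hf0 _))
        _ = C * (f (j + k) * tailSum f (j + k + 1) ^ n) := by simp only [C]; ring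
    have hmajor : Summable fun j => C * (f (j + k) * tailSum f (j + k + 1) ^ n) := by
      refine Summable.mul_left _ (Summable.of_nonneg_of_le
        (fun j => mul_nonneg (hf0 _) (pow_nonneg (tailSum_nonneg hf0 _) _)) (fun j => ?_)
        (((summable_nat_add_iff k).2 hf).mul_right ((∑' n, f n) ^ n)))
      gcongr
      exacts [hf0 _, tailSum_nonneg hf0 _, tailSum_le_tsum hf0 hf _]
    have hsum := Summable.of_nonneg_of_le (fun _ => norm_nonneg _) hterm hmajor
    rw [picardIter_succ]
    calc ‖∑' j, K k j * picardIter K n (j + k + 1)‖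
        ≤ ∑' j, ‖K k j * picardIter K n (j + k + 1)‖ := norm_tsum_le_tsum_norm hsum
      _ ≤ ∑' j, C * (f (j + k) * tailSum f (j + k + 1) ^ n) := hsum.tsum_le_tsum hterm hmajor
      _ = C * ∑' j, f (j + k) * tailSum f (j + k + 1) ^ n := tsum_mul_left
      _ ≤ C * (tailSum f k ^ (n + 1) / (n + 1)) := by
          gcongr; exact tsum_mul_tailSum_pow_le hf0 hf n k
      _ = (w * tailSum f k) ^ (n + 1) / (n + 1) ! := by
          simp only [C, Nat.factorial_succ]; push_cast; field_simp; ring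

lemma norm_picardIter_le_tsum (n k : ℕ) :
    ‖picardIter K n k‖ ≤ (w * ∑' n, f n) ^ n / n ! := by
  refine (norm_picardIter_le hf0 hf hw hK n k).trans ?_
  have hs : 0 ≤ tailSum f k := tailSum_nonneg hf0 k
  gcongr
  exact tailSum_le_tsum hf0 hf k

lemma norm_mul_picardIter_le (n k j : ℕ) :
    ‖K k j * picardIter K n (j + k + 1)‖ ≤ f (j + k) * (w * ((w * ∑' n, f n) ^ n / n !)) :=
  calc ‖K k j * picardIter K n (j + k + 1)‖ = ‖K k j‖ * ‖picardIter K n (j + k + 1)‖ := norm_mul _ _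
    _ ≤ (w * f (j + k)) * ((w * ∑' n, f n) ^ n / n !) :=
        mul_le_mul (hK k j) (norm_picardIter_le_tsum hf0 hf hw hK n _) (norm_nonneg _)
          (mul_nonneg hw (hf0 _))
    _ = f (j + k) * (w * ((w * ∑' n, f n) ^ n / n !)) := by ring

lemma summable_norm_picardIter (k : ℕ) : Summable fun n => ‖picardIter K n k‖ :=
  Summable.of_nonneg_of_le (fun _ => norm_nonneg _)
    (fun n => norm_picardIter_le_tsum hf0 hf hw hK n k) (Real.summable_pow_div_factorial _)

lemma norm_volterraSol_sub_one_le (k : ℕ) :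
    ‖volterraSol K k - 1‖ ≤ Real.exp (w * tailSum f k) - 1 := by
  set x := w * tailSum f k
  have hexp : HasSum (fun n => x ^ (n + 1) / (n + 1) !) (Real.exp x - 1) := by
    have h := (hasSum_nat_add_iff' 1).2
      (Real.exp_eq_exp_ℝ ▸ NormedSpace.expSeries_div_hasSum_exp x)
    simpa only [range_one, sum_singleton, pow_zero, Nat.factorial_zero, Nat.cast_one, div_one]
      using h
  have hsum := (summable_nat_add_iff 1).2 (summable_norm_picardIter hf0 hf hw hK k)
  have hsplit : volterraSol K k - 1 = ∑' n, picardIter K (n + 1) k := by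
    rw [volterraSol, (summable_norm_picardIter hf0 hf hw hK k).of_norm.tsum_eq_zero_add,
      picardIter_zero, add_sub_cancel_left]
  calc ‖volterraSol K k - 1‖ ≤ ∑' n, ‖picardIter K (n + 1) k‖ :=
        hsplit ▸ norm_tsum_le_tsum_norm hsum
    _ ≤ Real.exp x - 1 :=
        hasSum_le (fun n => norm_picardIter_le hf0 hf hw hK (n + 1) k) hsum.hasSum hexp

lemma norm_volterraSol_le (k : ℕ) : ‖volterraSol K k‖ ≤ Real.exp (w * ∑' n, f n) :=
  calc ‖volterraSol K k‖ ≤ ‖volterraSol K k - 1‖ + ‖(1 : ℂ)‖ := norm_le_norm_sub_add _ _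
    _ ≤ Real.exp (w * tailSum f k) := by
        rw [norm_one]; linarith [norm_volterraSol_sub_one_le hf0 hf hw hK k]
    _ ≤ Real.exp (w * ∑' n, f n) := by
        gcongr; exact tailSum_le_tsum hf0 hf k

lemma summable_norm_mul_volterraSol (k : ℕ) :
    Summable fun j => ‖K k j * volterraSol K (j + k + 1)‖ := by
  refine Summable.of_nonneg_of_le (fun _ => norm_nonneg _) (fun j => ?_)
    (((summable_nat_add_iff k).2 hf).mul_right (w * Real.exp (w * ∑' n, f n)))
  calc ‖K k j * volterraSol K (j + k + 1)‖ = ‖K k j‖ * ‖volterraSol K (j + k + 1)‖ := norm_mul _ _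
    _ ≤ (w * f (j + k)) * Real.exp (w * ∑' n, f n) :=
        mul_le_mul (hK k j) (norm_volterraSol_le hf0 hf hw hK _) (norm_nonneg _)
          (mul_nonneg hw (hf0 _))
    _ = f (j + k) * (w * Real.exp (w * ∑' n, f n)) := by ring

lemma volterraSol_eq (k : ℕ) :
    volterraSol K k = 1 + ∑' j, K k j * volterraSol K (j + k + 1) := by
  have htot : 0 ≤ ∑' n, f n := tsum_nonneg hf0
  have hmajor : Summable fun p : ℕ × ℕ => (w * ((w * ∑' n, f n) ^ p.1 / p.1 !)) * f (p.2 + k) :=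
    ((Real.summable_pow_div_factorial _).mul_left w).mul_of_nonneg ((summable_nat_add_iff k).2 hf)
      (fun n => mul_nonneg hw (div_nonneg (pow_nonneg (mul_nonneg hw htot) _) (Nat.cast_nonneg _)))
      (fun j => hf0 _)
  have hdouble : Summable (Function.uncurry fun n j => K k j * picardIter K n (j + k + 1)) :=
    Summable.of_norm <| Summable.of_nonneg_of_le (fun _ => norm_nonneg _)
      (fun p => (norm_mul_picardIter_le hf0 hf hw hK p.1 k p.2).trans_eq (mul_comm _ _)) hmajor
  calc volterraSol K k = 1 + ∑' n, picardIter K (n + 1) k := by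
        rw [volterraSol, (summable_norm_picardIter hf0 hf hw hK k).of_norm.tsum_eq_zero_add,
          picardIter_zero]
    _ = 1 + ∑' (n) (j), K k j * picardIter K n (j + k + 1) := by simp only [picardIter_succ]
    _ = 1 + ∑' (j) (n), K k j * picardIter K n (j + k + 1) := by rw [hdouble.tsum_comm]
    _ = 1 + ∑' j, K k j * volterraSol K (j + k + 1) := by simp only [volterraSol, tsum_mul_left]

end Picard

section Regularity

lemma tendstoLocallyUniformlyOn_tsum_of_bound {X E : Type*} [TopologicalSpace X]
    [NormedAddCommGroup E] [CompleteSpace E] {F : ℕ → X → E} {S : Set X} {w : X → ℝ}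
    (hw : ContinuousOn w S)
    (hbound : ∀ M, ∃ u : ℕ → ℝ, Summable u ∧ ∀ n, ∀ x ∈ S, w x ≤ M → ‖F n x‖ ≤ u n) :
    TendstoLocallyUniformlyOn (fun s x => ∑ n ∈ s, F n x) (fun x => ∑' n, F n x) atTop S :=
  tendstoLocallyUniformlyOn_of_forall_exists_nhds fun x hx => by
    obtain ⟨u, hu, hFu⟩ := hbound (w x + 1)
    refine ⟨S ∩ {y | w y ≤ w x + 1},
      inter_mem self_mem_nhdsWithin ((hw x hx).eventually_le_const (lt_add_one _)),
      tendstoUniformlyOn_tsum hu fun n y hy => hFu n y hy.1 hy.2⟩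

variable {S U : Set ℂ} {w : ℂ → ℝ}

lemma continuousOn_differentiableOn_tsum {F : ℕ → ℂ → ℂ} (hU : IsOpen U) (hUS : U ⊆ S)
    (hw : ContinuousOn w S) (hc : ∀ n, ContinuousOn (F n) S)
    (hd : ∀ n, DifferentiableOn ℂ (F n) U)
    (hbound : ∀ M, ∃ u : ℕ → ℝ, Summable u ∧ ∀ n, ∀ x ∈ S, w x ≤ M → ‖F n x‖ ≤ u n) :
    ContinuousOn (fun z => ∑' n, F n z) S ∧ DifferentiableOn ℂ (fun z => ∑' n, F n z) U := by
  have h := tendstoLocallyUniformlyOn_tsum_of_bound hw hbound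
  exact ⟨h.continuousOn (Frequently.of_forall fun s => continuousOn_finsetSum s fun n _ => hc n),
    (h.mono hUS).differentiableOn
      (Eventually.of_forall fun s => DifferentiableOn.fun_sum fun n _ => hd n) hU⟩

variable {K : ℂ → ℕ → ℕ → ℂ} {f : ℕ → ℝ}
  (hU : IsOpen U) (hUS : U ⊆ S) (hf0 : ∀ n, 0 ≤ f n) (hf : Summable f)
  (hw0 : ∀ z ∈ S, 0 ≤ w z) (hw : ContinuousOn w S)
  (hK : ∀ z ∈ S, ∀ k j, ‖K z k j‖ ≤ w z * f (j + k))
  (hKc : ∀ k j, ContinuousOn (fun z => K z k j) S)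
  (hKd : ∀ k j, DifferentiableOn ℂ (fun z => K z k j) U)
include hU hUS hf0 hf hw0 hw hK hKc hKd

lemma picardIter_regular (n k : ℕ) :
    ContinuousOn (fun z => picardIter (K z) n k) S ∧
      DifferentiableOn ℂ (fun z => picardIter (K z) n k) U := by
  induction n generalizing k with
  | zero => exact ⟨continuousOn_const, differentiableOn_const 1⟩
  | succ n ih =>
    simp only [picardIter_succ]
    refine continuousOn_differentiableOn_tsum hU hUS hw (fun j => (hKc k j).mul (ih _).1)
      (fun j => (hKd k j).mul (ih _).2) fun M =>
        ⟨fun j => f (j + k) * (M * ((M * ∑' n, f n) ^ n / n !)),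
          ((summable_nat_add_iff k).2 hf).mul_right _, fun j z hz hM => ?_⟩
    have hwz := hw0 z hz
    have htot : 0 ≤ ∑' n, f n := tsum_nonneg hf0
    refine (norm_mul_picardIter_le hf0 hf (hw0 z hz) (hK z hz) n k j).trans ?_
    dsimp only
    gcongr
    exacts [hf0 _, hwz.trans hM]

lemma volterraSol_regular (k : ℕ) :
    ContinuousOn (fun z => volterraSol (K z) k) S ∧
      DifferentiableOn ℂ (fun z => volterraSol (K z) k) U := by
  refine continuousOn_differentiableOn_tsum hU hUS hw
    (fun n => (picardIter_regular hU hUS hf0 hf hw0 hw hK hKc hKd n k).1)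
    (fun n => (picardIter_regular hU hUS hf0 hf hw0 hw hK hKc hKd n k).2)
    fun M => ⟨fun n => (M * ∑' n, f n) ^ n / n !, Real.summable_pow_div_factorial _,
      fun n z hz hM => ?_⟩
  have hwz := hw0 z hz
  have htot : 0 ≤ ∑' n, f n := tsum_nonneg hf0
  refine (norm_picardIter_le_tsum hf0 hf (hw0 z hz) (hK z hz) n k).trans ?_
  dsimp only
  gcongr

end Regularity

section Kernel

variable {a b c : ℕ → ℂ} {z : ℂ}

def ω (z : ℂ) : ℂ := 2 * z / (1 - z ^ 2)

/-- `z ^ j * G(k, k + j; z)`. -/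
def greenPoly (z : ℂ) (j : ℕ) : ℂ := z * ∑ i ∈ range j, (z ^ 2) ^ i

lemma greenPoly_eq (hz : z ^ 2 ≠ 1) (j : ℕ) :
    greenPoly z j = z * (1 - (z ^ 2) ^ j) / (1 - z ^ 2) := by
  rw [greenPoly, ← geom_sum_mul_neg, ← mul_assoc, mul_div_cancel_right₀ _ (sub_ne_zero.2 hz.symm)]

lemma greenG_add_eq (hz0 : z ≠ 0) (hz : z ^ 2 ≠ 1) (k : ℤ) (j : ℕ) :
    greenG z k (k + j) = greenPoly z j / z ^ j := by
  have h1 : (1 : ℂ) - z ^ 2 ≠ 0 := sub_ne_zero.2 hz.symm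
  have h2 : z - z⁻¹ ≠ 0 := fun h => hz (by field_simp at h; linear_combination h)
  rw [greenG, if_pos (by omega), add_sub_cancel_left, show k - (k + j) = -(j : ℤ) by ring,
    zpow_neg, zpow_natCast, greenPoly_eq hz]
  field_simp
  ring

lemma norm_greenPoly_le (hz1 : ‖z‖ ≤ 1) (hz : z ^ 2 ≠ 1) (j : ℕ) : ‖greenPoly z j‖ ≤ ‖ω z‖ := by
  have h : ‖1 - (z ^ 2) ^ j‖ ≤ 2 :=
    calc ‖1 - (z ^ 2) ^ j‖ ≤ ‖(1 : ℂ)‖ + ‖(z ^ 2) ^ j‖ := norm_sub_le _ _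
      _ ≤ 1 + 1 := by
          rw [norm_one, norm_pow, norm_pow]
          gcongr
          exact pow_le_one₀ (by positivity) (pow_le_one₀ (norm_nonneg z) hz1)
      _ = 2 := by norm_num
  rw [greenPoly_eq hz, ω, norm_div, norm_div, norm_mul, norm_mul, Complex.norm_two, mul_comm 2]
  gcongr

/-- `δ a b c m` is `δ_{m+1}` in the indexing of the sequences `a, b, c`. -/
def δ (a b c : ℕ → ℂ) (m : ℕ) : ℝ := ‖b (m + 1)‖ + ‖1 - a m * c m‖

lemma δ_nonneg (m : ℕ) : 0 ≤ δ a b c m := add_nonneg (norm_nonneg _) (norm_nonneg _)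

/-- The kernel of the equation for `u_k / z ^ k`. -/
def reducedKernel (a b c : ℕ → ℂ) (z : ℂ) (k j : ℕ) : ℂ :=
  -b (j + k + 1) * greenPoly z (j + 1) + (1 - a (j + k) * c (j + k)) * (z * greenPoly z j)

lemma kerT_mul_pow_eq (hz0 : z ≠ 0) (hz : z ^ 2 ≠ 1) (k j : ℕ) :
    kerT a b c z k (j + k + 1) * z ^ (j + k + 1) = z ^ k * reducedKernel a b c z k j := by
  have e1 : ((j + k + 1 : ℕ) : ℤ) = k + (j + 1 : ℕ) := by push_cast; ring
  have e2 : ((j + k + 1 : ℕ) : ℤ) - 1 = k + (j : ℕ) := by push_cast; ring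
  rw [kerT, e1, greenG_add_eq hz0 hz, ← e1, e2, greenG_add_eq hz0 hz, reducedKernel,
    Nat.add_sub_cancel]
  field_simp
  ring

lemma norm_reducedKernel_le (hz1 : ‖z‖ ≤ 1) (hz : z ^ 2 ≠ 1) (k j : ℕ) :
    ‖reducedKernel a b c z k j‖ ≤ ‖ω z‖ * δ a b c (j + k) := by
  have hzg : ‖z * greenPoly z j‖ ≤ ‖ω z‖ := by
    rw [norm_mul]
    exact (mul_le_of_le_one_left (norm_nonneg _) hz1).trans (norm_greenPoly_le hz1 hz j)
  calc ‖reducedKernel a b c z k j‖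
      ≤ ‖b (j + k + 1)‖ * ‖greenPoly z (j + 1)‖
        + ‖1 - a (j + k) * c (j + k)‖ * ‖z * greenPoly z j‖ := by
        rw [reducedKernel, ← norm_neg (b _), ← norm_mul, ← norm_mul]
        exact norm_add_le _ _
    _ ≤ ‖b (j + k + 1)‖ * ‖ω z‖ + ‖1 - a (j + k) * c (j + k)‖ * ‖ω z‖ := by
        gcongr
        exact norm_greenPoly_le hz1 hz _
    _ = ‖ω z‖ * δ a b c (j + k) := by rw [δ]; ring

lemma continuous_reducedKernel (k j : ℕ) : Continuous fun z => reducedKernel a b c z k j := by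
  unfold reducedKernel greenPoly
  fun_prop

lemma differentiable_reducedKernel (k j : ℕ) :
    Differentiable ℂ fun z => reducedKernel a b c z k j := by
  unfold reducedKernel greenPoly
  fun_prop

end Kernel

section Jost

variable {a b c : ℕ → ℂ}

def jost (a b c : ℕ → ℂ) (k : ℕ) (z : ℂ) : ℂ := z ^ k * volterraSol (reducedKernel a b c z) k

variable (hδ : Summable (δ a b c))
include hδ

lemma jost_regular (k : ℕ) :
    ContinuousOn (jost a b c k) (closedBall 0 1 \ {1, -1}) ∧
      DifferentiableOn ℂ (jost a b c k) (ball 0 1) := by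
  set S : Set ℂ := closedBall 0 1 \ {1, -1}
  have hmem : ∀ z ∈ S, ‖z‖ ≤ 1 ∧ z ^ 2 ≠ 1 := fun z hz => by
    simp only [S, Set.mem_sdiff, mem_closedBall_zero_iff, Set.mem_insert_iff,
      Set.mem_singleton_iff, not_or] at hz
    simpa [sq_eq_one_iff] using hz
  have hball : ball (0 : ℂ) 1 ⊆ S := fun z hz => by
    rw [mem_ball_zero_iff] at hz
    refine ⟨mem_closedBall_zero_iff.2 hz.le, ?_⟩
    rintro (rfl | rfl) <;> simp at hz
  have hω : ContinuousOn (fun z => ‖ω z‖) S :=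
    (ContinuousOn.div (by fun_prop) (by fun_prop)
      fun z hz => sub_ne_zero.2 (hmem z hz).2.symm).norm
  obtain ⟨hc, hd⟩ := volterraSol_regular isOpen_ball hball δ_nonneg hδ
    (fun _ _ => norm_nonneg _) hω
    (fun z hz k j => norm_reducedKernel_le (hmem z hz).1 (hmem z hz).2 k j)
    (fun k j => (continuous_reducedKernel k j).continuousOn)
    (fun k j => (differentiable_reducedKernel k j).differentiableOn) k
  exact ⟨(continuousOn_pow k).mul hc, (differentiableOn_pow k).mul hd⟩

variable {z : ℂ} (hz1 : ‖z‖ ≤ 1) (hz : z ^ 2 ≠ 1)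
include hz1 hz

lemma jost_eq (hz0 : z ≠ 0) (k : ℕ) :
    Summable (fun m => ‖kerT a b c z k (m + k + 1) * jost a b c (m + k + 1) z‖) ∧
      jost a b c k z = z ^ k + ∑' m, kerT a b c z k (m + k + 1) * jost a b c (m + k + 1) z := by
  set K := reducedKernel a b c z
  have hK : ∀ k j, ‖K k j‖ ≤ ‖ω z‖ * δ a b c (j + k) := norm_reducedKernel_le hz1 hz
  have hterm : ∀ m, kerT a b c z k (m + k + 1) * jost a b c (m + k + 1) z
      = z ^ k * (K k m * volterraSol K (m + k + 1)) := fun m => by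
    rw [jost, ← mul_assoc, kerT_mul_pow_eq hz0 hz, mul_assoc]
  simp only [hterm]
  refine ⟨?_, ?_⟩
  · simpa only [norm_mul] using (summable_norm_mul_volterraSol δ_nonneg hδ
      (norm_nonneg _) hK k).mul_left ‖z ^ k‖
  · rw [jost, tsum_mul_left, volterraSol_eq δ_nonneg hδ (norm_nonneg _) hK k, mul_add,
      mul_one]

lemma norm_jost_sub_pow_le (k : ℕ) :
    ‖jost a b c k z - z ^ k‖ ≤ ‖z‖ ^ k * (Real.exp (‖ω z‖ * tailSum (δ a b c) k) - 1) := by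
  rw [jost, ← mul_sub_one, norm_mul, norm_pow]
  gcongr
  exact norm_volterraSol_sub_one_le δ_nonneg hδ (norm_nonneg _)
    (norm_reducedKernel_le hz1 hz) k

end Jost

end JostSolution

open JostSolution

theorem stmt7_general (a b c : ℕ → ℂ)
    (hδ : Summable (fun m : ℕ => ‖b (m + 1)‖ + ‖1 - a m * c m‖)) :
    ∃ u : ℕ → ℂ → ℂ,
      (∀ k : ℕ, AnalyticOnNhd ℂ (u k) (Metric.ball (0 : ℂ) 1)) ∧
      (∀ k : ℕ, ContinuousOn (u k)
        (Metric.closedBall (0 : ℂ) 1 \ {(1 : ℂ), (-1 : ℂ)})) ∧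
      (∀ z : ℂ, z ∈ Metric.closedBall (0 : ℂ) 1 → z ≠ 0 → z ≠ 1 → z ≠ -1 → ∀ k : ℕ,
        Summable (fun m : ℕ => ‖kerT a b c z k (m + k + 1) * u (m + k + 1) z‖) ∧
        u k z = z ^ k + ∑' m : ℕ, kerT a b c z k (m + k + 1) * u (m + k + 1) z) ∧
      (∀ z : ℂ, z ∈ Metric.closedBall (0 : ℂ) 1 → z ≠ 1 → z ≠ -1 → ∀ k : ℕ,
        ‖u k z - z ^ k‖ ≤
          ‖z‖ ^ k *
            (Real.exp (‖2 * z / (1 - z ^ 2)‖ *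
                ∑' n : ℕ, (‖b (n + k + 1)‖ + ‖1 - a (n + k) * c (n + k)‖)) - 1)) := by
  have hsq : ∀ z : ℂ, z ≠ 1 → z ≠ -1 → z ^ 2 ≠ 1 := fun z h1 h2 => by simp [h1, h2]
  refine ⟨jost a b c, fun k => (jost_regular hδ k).2.analyticOnNhd isOpen_ball,
    fun k => (jost_regular hδ k).1, fun z hz hz0 h1 h2 k => ?_, fun z hz h1 h2 k => ?_⟩
  · exact jost_eq hδ (mem_closedBall_zero_iff.1 hz) (hsq z h1 h2) hz0 k
  · exact norm_jost_sub_pow_le hδ (mem_closedBall_zero_iff.1 hz) (hsq z h1 h2) k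

/-- Existence of the Jost solutions under `∑ δ_m < ∞` (Theorem 1.2 (i)):
`u_k⁺` is analytic in the open unit disk, continuous on the closed disk minus `±1`,
solves the Volterra equation, and satisfies
`|u_k⁺(z) - z^k| ≤ |z|^k (e^{|ω(z)| s₀(k)} - 1)` with `ω(z) = 2z/(1-z²)` and
`s₀(k) = ∑_{n=k+1}^∞ δ_n`, `δ_n = |b_n| + |1 - a_{n-1} c_{n-1}|`. -/
theorem stmt7 (a b c : ℕ → ℂ) (ha0 : a 0 = 1) (hc0 : c 0 = 1)
    (hδ : Summable (fun m : ℕ => ‖b (m + 1)‖ + ‖1 - a m * c m‖)) :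
    ∃ u : ℕ → ℂ → ℂ,
      (∀ k : ℕ, AnalyticOnNhd ℂ (u k) (Metric.ball (0 : ℂ) 1)) ∧
      (∀ k : ℕ, ContinuousOn (u k)
        (Metric.closedBall (0 : ℂ) 1 \ {(1 : ℂ), (-1 : ℂ)})) ∧
      (∀ z : ℂ, z ∈ Metric.closedBall (0 : ℂ) 1 → z ≠ 0 → z ≠ 1 → z ≠ -1 → ∀ k : ℕ,
        Summable (fun m : ℕ => ‖kerT a b c z k (m + k + 1) * u (m + k + 1) z‖) ∧
        u k z = z ^ k + ∑' m : ℕ, kerT a b c z k (m + k + 1) * u (m + k + 1) z) ∧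
      (∀ z : ℂ, z ∈ Metric.closedBall (0 : ℂ) 1 → z ≠ 1 → z ≠ -1 → ∀ k : ℕ,
        ‖u k z - z ^ k‖ ≤
          ‖z‖ ^ k *
            (Real.exp (‖2 * z / (1 - z ^ 2)‖ *
                ∑' n : ℕ, (‖b (n + k + 1)‖ + ‖1 - a (n + k) * c (n + k)‖)) - 1)) :=
  stmt7_general a b c hδ
end
end

section
/- Let a, b, c : ℕ → ℂ (indexed from 1, with the convention a_0 = c_0 = 1) satisfy Δ₁ := ∑_{m≥1} m·δ_m < ∞, where δ_m := |b_m| + |1 − a_{m−1} c_{m−1}|, and set s₁(k) := ∑_{n=k+1}^∞ n·δ_n. Then there exists a family of functions u_k⁺ : ℂ → ℂ (k ≥ 0) such that: (i) each u_k⁺ is analytic on the open unit disk and continuous on the closed unit disk; (ii) for every z in the closed unit disk with z ∉ {0, 1, −1} and every k ≥ 0, the series ∑_{m=k+1}^∞ T(k,m;z) u_m⁺(z) converges absolutely and u_k⁺(z) = z^k + ∑_{m=k+1}^∞ T(k,m;z) u_m⁺(z); (iii) for every z in the closed unit disk and every k ≥ 0, |u_k⁺(z) − z^k| ≤ |z|^k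 (exp(|z| s₁(k)) − 1). -/
noncomputable section

/-!
Write `u_k(z) = z^k W_k(z)`. Since `G(k,m;z) z^{m-k} = z (1 + z^2 + ⋯ + z^{2(m-k-1)})`,
the Volterra equation for `u_k` becomes `W_k = 1 + ∑_{m>k} K(k,m;z) W_m` with a polynomial
kernel satisfying `|K(k,m;z)| ≤ |z| m δ_m` on the closed disk. Its Neumann series
`W_k = ∑_j w_j(k)` converges: by induction `|w_j(k)| ≤ (|z| s₁(k))^j / j!`, the key step
being `∑_{m>k} m δ_m s₁(m)^j ≤ s₁(k)^{j+1}/(j+1)`, a discrete form of `∫ s^j (-ds)`.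
The bounds are uniform on the disk, so analyticity and continuity pass to the limit, and
summing them gives `|W_k - 1| ≤ exp(|z| s₁(k)) - 1`.
-/

open Finset Metric

section TailSum

variable {d : ℕ → ℝ}

def tailSum (d : ℕ → ℝ) (k : ℕ) : ℝ := ∑' n, d (n + k + 1)

lemma summable_shift (hd : Summable d) (k : ℕ) : Summable fun n => d (n + k + 1) :=
  (summable_nat_add_iff (k + 1)).2 hd

lemma tailSum_nonneg (hd0 : ∀ n, 0 ≤ d n) (k : ℕ) : 0 ≤ tailSum d k :=
  tsum_nonneg fun _ => hd0 _

lemma tailSum_eq_add (hd : Summable d) (k : ℕ) : tailSum d k = d (k + 1) + tailSum d (k + 1) := by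
  rw [tailSum, (summable_shift hd k).tsum_eq_zero_add, zero_add, tailSum]
  congr 1
  exact tsum_congr fun n => by ring_nf

lemma tailSum_antitone (hd0 : ∀ n, 0 ≤ d n) (hd : Summable d) : Antitone (tailSum d) :=
  antitone_nat_of_succ_le fun k => by
    rw [tailSum_eq_add hd k]
    linarith [hd0 (k + 1)]

lemma mul_sub_mul_pow_le_pow_sub_pow {x y : ℝ} (hy : 0 ≤ y) (hxy : y ≤ x) (j : ℕ) :
    (j + 1) * (x - y) * y ^ j ≤ x ^ (j + 1) - y ^ (j + 1) := by
  induction j with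
  | zero => simp
  | succ j ih =>
    have hpos : 0 ≤ (j + 1) * (x - y) * y ^ j := by
      have := sub_nonneg.2 hxy; positivity
    have hx_ih := mul_le_mul_of_nonneg_left ih (hy.trans hxy)
    have hy_x := mul_le_mul_of_nonneg_right hxy hpos
    push_cast
    linear_combination hx_ih + hy_x

lemma summable_mul_tailSum_pow (hd0 : ∀ n, 0 ≤ d n) (hd : Summable d) (k j : ℕ) :
    Summable fun m => d (m + k + 1) * tailSum d (m + k + 1) ^ j :=
  ((summable_shift hd k).mul_right (tailSum d k ^ j)).of_nonneg_of_le
    (fun m => mul_nonneg (hd0 _) (pow_nonneg (tailSum_nonneg hd0 _) j))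
    fun m => mul_le_mul_of_nonneg_left
      (pow_le_pow_left₀ (tailSum_nonneg hd0 _) (tailSum_antitone hd0 hd (by omega)) j) (hd0 _)

/-- Telescoping: `d (m + 1) = tailSum d m - tailSum d (m + 1)`, and
`(x - y) y^j ≤ (x^{j+1} - y^{j+1}) / (j + 1)` for `0 ≤ y ≤ x`. -/
lemma tsum_mul_tailSum_pow_le (hd0 : ∀ n, 0 ≤ d n) (hd : Summable d) (k j : ℕ) :
    ∑' m, d (m + k + 1) * tailSum d (m + k + 1) ^ j ≤ tailSum d k ^ (j + 1) / (j + 1) := by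
  set F : ℕ → ℝ := fun m => tailSum d (m + k) ^ (j + 1) / (j + 1)
  have hterm : ∀ m, d (m + k + 1) * tailSum d (m + k + 1) ^ j ≤ F m - F (m + 1) := by
    intro m
    have hd_eq : d (m + k + 1) = tailSum d (m + k) - tailSum d (m + k + 1) := by
      rw [tailSum_eq_add hd (m + k)]; ring
    have := mul_sub_mul_pow_le_pow_sub_pow (tailSum_nonneg hd0 _)
      (tailSum_antitone hd0 hd (Nat.le_succ (m + k))) j
    simp only [F, Nat.add_right_comm m 1 k, ← sub_div, le_div_iff₀ (by positivity : (0 : ℝ) < j + 1)]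
    rw [hd_eq]
    linarith
  refine (summable_mul_tailSum_pow hd0 hd k j).tsum_le_of_sum_range_le fun N => ?_
  calc ∑ m ∈ range N, d (m + k + 1) * tailSum d (m + k + 1) ^ j
      ≤ ∑ m ∈ range N, (F m - F (m + 1)) := sum_le_sum fun m _ => hterm m
    _ = F 0 - F N := sum_range_sub' F N
    _ ≤ F 0 := sub_le_self _ (by positivity [tailSum_nonneg hd0 (N + k)])
    _ = tailSum d k ^ (j + 1) / (j + 1) := by simp [F]

end TailSum

section NeumannSeries

variable (K : ℕ → ℕ → ℂ → ℂ)

/-- The `j`-th term of the Neumann series of `W k = 1 + ∑_{m>k} K k m W m`. -/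
def neumannTerm : ℕ → ℕ → ℂ → ℂ
  | 0 => fun _ _ => 1
  | j + 1 => fun k z => ∑' m, K k (m + k + 1) z * neumannTerm j (m + k + 1) z

def neumannSum (k : ℕ) (z : ℂ) : ℂ := ∑' j, neumannTerm K j k z

structure KernelMajorant (d : ℕ → ℝ) : Prop where
  nonneg : ∀ n, 0 ≤ d n
  summable : Summable d
  norm_le : ∀ k m z, ‖z‖ ≤ 1 → ‖K k m z‖ ≤ ‖z‖ * d m

variable {K} {d : ℕ → ℝ} {z : ℂ}

lemma KernelMajorant.norm_kernel_le_of_norm_le_one (h : KernelMajorant K d) {k m : ℕ}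
    (hz : ‖z‖ ≤ 1) : ‖K k m z‖ ≤ d m :=
  (h.norm_le k m z hz).trans (mul_le_of_le_one_left (h.nonneg m) hz)

lemma norm_neumannTerm_le (h : KernelMajorant K d) (j : ℕ) :
    ∀ k, ‖z‖ ≤ 1 → ‖neumannTerm K j k z‖ ≤ (‖z‖ * tailSum d k) ^ j / j.factorial := by
  induction j with
  | zero => simp [neumannTerm]
  | succ j ih =>
    intro k hz
    set c : ℝ := ‖z‖ ^ (j + 1) / j.factorial
    have hterm : ∀ m, ‖K k (m + k + 1) z * neumannTerm K j (m + k + 1) z‖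
        ≤ c * (d (m + k + 1) * tailSum d (m + k + 1) ^ j) := by
      intro m
      rw [norm_mul]
      calc ‖K k (m + k + 1) z‖ * ‖neumannTerm K j (m + k + 1) z‖
          ≤ (‖z‖ * d (m + k + 1)) * ((‖z‖ * tailSum d (m + k + 1)) ^ j / j.factorial) :=
            mul_le_mul (h.norm_le _ _ _ hz) (ih _ hz) (norm_nonneg _)
              (mul_nonneg (norm_nonneg z) (h.nonneg _))
        _ = c * (d (m + k + 1) * tailSum d (m + k + 1) ^ j) := by
            simp only [c]; ring
    calc ‖neumannTerm K (j + 1) k z‖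
        ≤ c * ∑' m, d (m + k + 1) * tailSum d (m + k + 1) ^ j :=
          tsum_of_norm_bounded
            ((summable_mul_tailSum_pow h.nonneg h.summable k j).hasSum.mul_left c) hterm
      _ ≤ c * (tailSum d k ^ (j + 1) / (j + 1)) := by
          gcongr; exact tsum_mul_tailSum_pow_le h.nonneg h.summable k j
      _ = (‖z‖ * tailSum d k) ^ (j + 1) / (j + 1).factorial := by
          simp only [c, Nat.factorial_succ]; push_cast; field_simp; ring

lemma norm_neumannTerm_le_of_norm_le_one (h : KernelMajorant K d) (j k : ℕ) (hz : ‖z‖ ≤ 1) :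
    ‖neumannTerm K j k z‖ ≤ tailSum d k ^ j / j.factorial := by
  refine (norm_neumannTerm_le h j k hz).trans ?_
  have hs := tailSum_nonneg h.nonneg k
  gcongr
  exact mul_le_of_le_one_left hs hz

lemma norm_kernel_mul_neumannTerm_le (h : KernelMajorant K d) (j k m : ℕ) (hz : ‖z‖ ≤ 1) :
    ‖K k (m + k + 1) z * neumannTerm K j (m + k + 1) z‖
      ≤ d (m + k + 1) * (tailSum d k ^ j / j.factorial) := by
  rw [norm_mul]
  refine mul_le_mul (h.norm_kernel_le_of_norm_le_one hz) ?_ (norm_nonneg _) (h.nonneg _)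
  refine (norm_neumannTerm_le_of_norm_le_one h j _ hz).trans ?_
  have hs := tailSum_nonneg h.nonneg (m + k + 1)
  gcongr
  exact tailSum_antitone h.nonneg h.summable (by omega)

lemma summable_neumannTerm (h : KernelMajorant K d) (k : ℕ) (hz : ‖z‖ ≤ 1) :
    Summable fun j => neumannTerm K j k z :=
  .of_norm_bounded (Real.summable_pow_div_factorial _)
    fun j => norm_neumannTerm_le_of_norm_le_one h j k hz

lemma continuousOn_neumannTerm (h : KernelMajorant K d)
    (hK : ∀ k m, ContinuousOn (K k m) (closedBall 0 1)) (j : ℕ) :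
    ∀ k, ContinuousOn (neumannTerm K j k) (closedBall 0 1) := by
  induction j with
  | zero => exact fun _ => continuousOn_const
  | succ j ih =>
    exact fun k => continuousOn_tsum (fun m => (hK _ _).mul (ih _))
      ((summable_shift h.summable k).mul_right _)
      fun m _ hz => norm_kernel_mul_neumannTerm_le h j k m (mem_closedBall_zero_iff.1 hz)

lemma differentiableOn_neumannTerm (h : KernelMajorant K d)
    (hK : ∀ k m, DifferentiableOn ℂ (K k m) (ball 0 1)) (j : ℕ) :
    ∀ k, DifferentiableOn ℂ (neumannTerm K j k) (ball 0 1) := by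
  induction j with
  | zero => exact fun _ => differentiableOn_const _
  | succ j ih =>
    exact fun k => Complex.differentiableOn_tsum_of_summable_norm
      ((summable_shift h.summable k).mul_right _) (fun m => (hK _ _).mul (ih _)) isOpen_ball
      fun m _ hz => norm_kernel_mul_neumannTerm_le h j k m (mem_ball_zero_iff.1 hz).le

lemma continuousOn_neumannSum (h : KernelMajorant K d)
    (hK : ∀ k m, ContinuousOn (K k m) (closedBall 0 1)) (k : ℕ) :
    ContinuousOn (neumannSum K k) (closedBall 0 1) :=
  continuousOn_tsum (fun j => continuousOn_neumannTerm h hK j k)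
    (Real.summable_pow_div_factorial _)
    fun j _ hz => norm_neumannTerm_le_of_norm_le_one h j k (mem_closedBall_zero_iff.1 hz)

lemma differentiableOn_neumannSum (h : KernelMajorant K d)
    (hK : ∀ k m, DifferentiableOn ℂ (K k m) (ball 0 1)) (k : ℕ) :
    DifferentiableOn ℂ (neumannSum K k) (ball 0 1) :=
  Complex.differentiableOn_tsum_of_summable_norm (Real.summable_pow_div_factorial _)
    (fun j => differentiableOn_neumannTerm h hK j k) isOpen_ball
    fun j _ hz => norm_neumannTerm_le_of_norm_le_one h j k (mem_ball_zero_iff.1 hz).le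

lemma neumannSum_eq_one_add_tsum_neumannTerm (h : KernelMajorant K d) (k : ℕ) (hz : ‖z‖ ≤ 1) :
    neumannSum K k z = 1 + ∑' j, neumannTerm K (j + 1) k z :=
  (summable_neumannTerm h k hz).tsum_eq_zero_add

lemma norm_neumannSum_sub_one_le (h : KernelMajorant K d) (k : ℕ) (hz : ‖z‖ ≤ 1) :
    ‖neumannSum K k z - 1‖ ≤ Real.exp (‖z‖ * tailSum d k) - 1 := by
  have hexp : HasSum (fun j : ℕ => (‖z‖ * tailSum d k) ^ (j + 1) / (j + 1).factorial)
      (Real.exp (‖z‖ * tailSum d k) - 1) := by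
    simpa [Real.exp_eq_exp_ℝ] using
      (hasSum_nat_add_iff' 1).2 (NormedSpace.expSeries_div_hasSum_exp (‖z‖ * tailSum d k))
  rw [neumannSum_eq_one_add_tsum_neumannTerm h k hz, add_sub_cancel_left]
  exact tsum_of_norm_bounded hexp fun j => norm_neumannTerm_le h (j + 1) k hz

lemma norm_neumannSum_le (h : KernelMajorant K d) (k : ℕ) (hz : ‖z‖ ≤ 1) :
    ‖neumannSum K k z‖ ≤ Real.exp (tailSum d k) := by
  have hexp : HasSum (fun j : ℕ => tailSum d k ^ j / j.factorial) (Real.exp (tailSum d k)) := by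
    simpa [Real.exp_eq_exp_ℝ] using NormedSpace.expSeries_div_hasSum_exp (tailSum d k)
  exact tsum_of_norm_bounded hexp fun j => norm_neumannTerm_le_of_norm_le_one h j k hz

lemma summable_norm_kernel_mul_neumannSum (h : KernelMajorant K d) (k : ℕ) (hz : ‖z‖ ≤ 1) :
    Summable fun m => ‖K k (m + k + 1) z * neumannSum K (m + k + 1) z‖ := by
  refine ((summable_shift h.summable k).mul_right (Real.exp (tailSum d k))).of_nonneg_of_le
    (fun _ => norm_nonneg _) fun m => ?_
  rw [norm_mul]
  refine mul_le_mul (h.norm_kernel_le_of_norm_le_one hz) ?_ (norm_nonneg _) (h.nonneg _)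
  exact (norm_neumannSum_le h _ hz).trans
    (Real.exp_le_exp.2 (tailSum_antitone h.nonneg h.summable (by omega)))

lemma neumannSum_eq_one_add_tsum (h : KernelMajorant K d) (k : ℕ) (hz : ‖z‖ ≤ 1) :
    neumannSum K k z = 1 + ∑' m, K k (m + k + 1) z * neumannSum K (m + k + 1) z := by
  have hsum : Summable (Function.uncurry
      fun m j => K k (m + k + 1) z * neumannTerm K j (m + k + 1) z) := by
    refine .of_norm_bounded ?_ fun p => norm_kernel_mul_neumannTerm_le h p.2 k p.1 hz
    exact (summable_shift h.summable k).mul_of_nonneg (Real.summable_pow_div_factorial _)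
      (fun m => h.nonneg _) fun j => by positivity [tailSum_nonneg h.nonneg k]
  rw [neumannSum_eq_one_add_tsum_neumannTerm h k hz]
  congr 1
  calc ∑' j, neumannTerm K (j + 1) k z
      = ∑' j, ∑' m, K k (m + k + 1) z * neumannTerm K j (m + k + 1) z := rfl
    _ = ∑' m, ∑' j, K k (m + k + 1) z * neumannTerm K j (m + k + 1) z := hsum.tsum_comm
    _ = ∑' m, K k (m + k + 1) z * neumannSum K (m + k + 1) z :=
        tsum_congr fun m => tsum_mul_left

end NeumannSeries

lemma norm_geom_sum_sq_le {z : ℂ} (hz : ‖z‖ ≤ 1) (n : ℕ) : ‖∑ i ∈ range n, (z ^ 2) ^ i‖ ≤ n := by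
  refine (norm_sum_le _ _).trans ?_
  have hz2 : ‖z ^ 2‖ ≤ 1 := by rw [norm_pow]; exact pow_le_one₀ (norm_nonneg z) hz
  simpa using sum_le_sum fun i (_ : i ∈ range n) => (norm_pow (z ^ 2) i).trans_le
    (pow_le_one₀ (norm_nonneg _) hz2)

lemma greenG_mul_pow {z : ℂ} (hz0 : z ≠ 0) (hz : z - z⁻¹ ≠ 0) (k : ℤ) (n : ℕ) :
    greenG z k (k + n) * z ^ n = z * ∑ i ∈ range n, (z ^ 2) ^ i := by
  have hgeom := geom_sum_mul (z ^ 2) n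
  rw [greenG, if_pos (by omega), add_sub_cancel_left, sub_add_cancel_left, zpow_neg, zpow_natCast,
    div_mul_eq_mul_div, div_eq_iff hz]
  have hzn : z ^ n ≠ 0 := pow_ne_zero n hz0
  calc (z ^ n - (z ^ n)⁻¹) * z ^ n = (z ^ 2) ^ n - 1 := by
        rw [sub_mul, inv_mul_cancel₀ hzn]; ring
    _ = (z * ∑ i ∈ range n, (z ^ 2) ^ i) * (z - z⁻¹) := by
        rw [← hgeom]; field_simp

section JostKernel

variable (a b c : ℕ → ℂ)

def jostWeight (m : ℕ) : ℝ := m * (‖b m‖ + ‖1 - a (m - 1) * c (m - 1)‖)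

def jostKernel (k m : ℕ) (z : ℂ) : ℂ :=
  -(b m) * z * ∑ i ∈ range (m - k), (z ^ 2) ^ i
    + (1 - a (m - 1) * c (m - 1)) * z ^ 2 * ∑ i ∈ range (m - k - 1), (z ^ 2) ^ i

def jostSolution (k : ℕ) (z : ℂ) : ℂ := z ^ k * neumannSum (jostKernel a b c) k z

variable {a b c}

lemma differentiable_jostKernel (k m : ℕ) : Differentiable ℂ (jostKernel a b c k m) := by
  unfold jostKernel; fun_prop

lemma norm_jostKernel_le (k m : ℕ) {z : ℂ} (hz : ‖z‖ ≤ 1) :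
    ‖jostKernel a b c k m z‖ ≤ ‖z‖ * jostWeight a b c m := by
  have h1 : ‖∑ i ∈ range (m - k), (z ^ 2) ^ i‖ ≤ m :=
    (norm_geom_sum_sq_le hz _).trans (by gcongr; omega)
  have h2 : ‖∑ i ∈ range (m - k - 1), (z ^ 2) ^ i‖ ≤ m :=
    (norm_geom_sum_sq_le hz _).trans (by gcongr; omega)
  have hz2 : ‖z‖ ^ 2 ≤ ‖z‖ := by nlinarith [norm_nonneg z]
  unfold jostKernel jostWeight
  refine (norm_add_le _ _).trans ?_
  simp only [norm_mul, norm_neg, norm_pow]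
  calc ‖b m‖ * ‖z‖ * ‖∑ i ∈ range (m - k), (z ^ 2) ^ i‖
        + ‖1 - a (m - 1) * c (m - 1)‖ * ‖z‖ ^ 2 * ‖∑ i ∈ range (m - k - 1), (z ^ 2) ^ i‖
      ≤ ‖b m‖ * ‖z‖ * m + ‖1 - a (m - 1) * c (m - 1)‖ * ‖z‖ * m := by gcongr
    _ = ‖z‖ * (m * (‖b m‖ + ‖1 - a (m - 1) * c (m - 1)‖)) := by ring

lemma kernelMajorant_jostKernel (hΔ : Summable (jostWeight a b c)) :
    KernelMajorant (jostKernel a b c) (jostWeight a b c) where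
  nonneg _ := by unfold jostWeight; positivity
  summable := hΔ
  norm_le k m _ hz := norm_jostKernel_le k m hz

lemma kerT_mul_pow {z : ℂ} (hz0 : z ≠ 0) (hz : z - z⁻¹ ≠ 0) {k m : ℕ} (hkm : k < m) :
    kerT a b c z k m * z ^ m = z ^ k * jostKernel a b c k m z := by
  obtain ⟨n, rfl⟩ := Nat.exists_eq_add_of_lt hkm
  have h1 := greenG_mul_pow hz0 hz k (n + 1)
  have h2 := greenG_mul_pow hz0 hz k n
  push_cast at h1 h2
  rw [← add_assoc] at h1
  simp only [kerT, jostKernel, show k + n + 1 - k = n + 1 by omega]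
  push_cast
  rw [show (k : ℤ) + n + 1 - 1 = k + n by ring]
  linear_combination (-(b (k + n + 1)) * z ^ k) * h1
    + ((1 - a (k + n) * c (k + n)) * z ^ (k + 1)) * h2

end JostKernel

lemma sub_inv_ne_zero {z : ℂ} (hz0 : z ≠ 0) (hz1 : z ≠ 1) (hz1' : z ≠ -1) : z - z⁻¹ ≠ 0 := by
  intro h
  have h' : (z - 1) * (z + 1) = 0 := by
    field_simp at h
    linear_combination h
  rcases mul_eq_zero.1 h' with h'' | h''
  · exact hz1 (sub_eq_zero.1 h'')
  · exact hz1' (eq_neg_of_add_eq_zero_left h'')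

section JostSolution

variable {a b c : ℕ → ℂ} {z : ℂ}

lemma analyticOnNhd_jostSolution (hΔ : Summable (jostWeight a b c)) (k : ℕ) :
    AnalyticOnNhd ℂ (jostSolution a b c k) (ball 0 1) :=
  ((differentiable_pow k).differentiableOn.mul
    (differentiableOn_neumannSum (kernelMajorant_jostKernel hΔ)
      (fun k m => (differentiable_jostKernel k m).differentiableOn) k)).analyticOnNhd isOpen_ball

lemma continuousOn_jostSolution (hΔ : Summable (jostWeight a b c)) (k : ℕ) :
    ContinuousOn (jostSolution a b c k) (closedBall 0 1) :=
  (continuous_pow k).continuousOn.mul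
    (continuousOn_neumannSum (kernelMajorant_jostKernel hΔ)
      (fun k m => (differentiable_jostKernel k m).continuous.continuousOn) k)

lemma kerT_mul_jostSolution (hz0 : z ≠ 0) (hz : z - z⁻¹ ≠ 0) (k m : ℕ) :
    kerT a b c z k (m + k + 1) * jostSolution a b c (m + k + 1) z
      = z ^ k * (jostKernel a b c k (m + k + 1) z * neumannSum (jostKernel a b c) (m + k + 1) z) := by
  rw [jostSolution, ← mul_assoc, kerT_mul_pow hz0 hz (by omega), mul_assoc]

lemma summable_norm_kerT_mul_jostSolution (hΔ : Summable (jostWeight a b c)) (hz1 : ‖z‖ ≤ 1)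
    (hz0 : z ≠ 0) (hz : z - z⁻¹ ≠ 0) (k : ℕ) :
    Summable fun m => ‖kerT a b c z k (m + k + 1) * jostSolution a b c (m + k + 1) z‖ :=
  ((summable_norm_kernel_mul_neumannSum (kernelMajorant_jostKernel hΔ) k hz1).mul_left
    ‖z ^ k‖).congr fun m => by rw [kerT_mul_jostSolution hz0 hz, norm_mul (z ^ k)]

lemma jostSolution_eq_pow_add_tsum (hΔ : Summable (jostWeight a b c)) (hz1 : ‖z‖ ≤ 1)
    (hz0 : z ≠ 0) (hz : z - z⁻¹ ≠ 0) (k : ℕ) :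
    jostSolution a b c k z
      = z ^ k + ∑' m, kerT a b c z k (m + k + 1) * jostSolution a b c (m + k + 1) z := by
  simp_rw [kerT_mul_jostSolution hz0 hz, tsum_mul_left]
  rw [jostSolution, neumannSum_eq_one_add_tsum (kernelMajorant_jostKernel hΔ) k hz1, mul_one_add]

lemma norm_jostSolution_sub_pow_le (hΔ : Summable (jostWeight a b c)) (hz1 : ‖z‖ ≤ 1) (k : ℕ) :
    ‖jostSolution a b c k z - z ^ k‖
      ≤ ‖z‖ ^ k * (Real.exp (‖z‖ * tailSum (jostWeight a b c) k) - 1) := by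
  rw [jostSolution, ← mul_sub_one, norm_mul, norm_pow]
  exact mul_le_mul_of_nonneg_left
    (norm_neumannSum_sub_one_le (kernelMajorant_jostKernel hΔ) k hz1) (by positivity)

end JostSolution

theorem stmt9_general (a b c : ℕ → ℂ)
    (hΔ1 : Summable (fun m : ℕ => ((m : ℝ) + 1) * (‖b (m + 1)‖ + ‖1 - a m * c m‖))) :
    ∃ u : ℕ → ℂ → ℂ,
      (∀ k : ℕ, AnalyticOnNhd ℂ (u k) (Metric.ball (0 : ℂ) 1)) ∧
      (∀ k : ℕ, ContinuousOn (u k) (Metric.closedBall (0 : ℂ) 1)) ∧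
      (∀ z : ℂ, z ∈ Metric.closedBall (0 : ℂ) 1 → z ≠ 0 → z ≠ 1 → z ≠ -1 → ∀ k : ℕ,
        Summable (fun m : ℕ => ‖kerT a b c z k (m + k + 1) * u (m + k + 1) z‖) ∧
        u k z = z ^ k + ∑' m : ℕ, kerT a b c z k (m + k + 1) * u (m + k + 1) z) ∧
      (∀ z : ℂ, z ∈ Metric.closedBall (0 : ℂ) 1 → ∀ k : ℕ,
        ‖u k z - z ^ k‖ ≤
          ‖z‖ ^ k *
            (Real.exp (‖z‖ *
                ∑' n : ℕ, ((n + k + 1 : ℝ) * (‖b (n + k + 1)‖ + ‖1 - a (n + k) * c (n + k)‖))) - 1)) := by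
  have hΔ : Summable (jostWeight a b c) :=
    (summable_nat_add_iff 1).1 (hΔ1.congr fun m => by simp [jostWeight])
  have htail : ∀ k : ℕ, ∑' n : ℕ, ((n + k + 1 : ℝ) * (‖b (n + k + 1)‖ + ‖1 - a (n + k) * c (n + k)‖))
      = tailSum (jostWeight a b c) k :=
    fun k => tsum_congr fun n => by simp [jostWeight]
  refine ⟨jostSolution a b c, analyticOnNhd_jostSolution hΔ, continuousOn_jostSolution hΔ,
    fun z hz hz0 hz1 hz1' k => ?_, fun z hz k => ?_⟩
  · rw [mem_closedBall_zero_iff] at hz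
    have hz' := sub_inv_ne_zero hz0 hz1 hz1'
    exact ⟨summable_norm_kerT_mul_jostSolution hΔ hz hz0 hz' k,
      jostSolution_eq_pow_add_tsum hΔ hz hz0 hz' k⟩
  · rw [htail]
    exact norm_jostSolution_sub_pow_le hΔ (mem_closedBall_zero_iff.1 hz) k

/-- Existence of the Jost solutions under `∑ m δ_m < ∞` (Theorem 1.2 (ii)):
`u_k⁺` is analytic in the open unit disk, continuous on the closed disk,
solves the Volterra equation, and satisfies
`|u_k⁺(z) - z^k| ≤ |z|^k (e^{|z| s₁(k)} - 1)` with
`s₁(k) = ∑_{n=k+1}^∞ n δ_n`, `δ_n = |b_n| + |1 - a_{n-1} c_{n-1}|`. -/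
theorem stmt9 (a b c : ℕ → ℂ) (ha0 : a 0 = 1) (hc0 : c 0 = 1)
    (hΔ1 : Summable (fun m : ℕ => ((m : ℝ) + 1) * (‖b (m + 1)‖ + ‖1 - a m * c m‖))) :
    ∃ u : ℕ → ℂ → ℂ,
      (∀ k : ℕ, AnalyticOnNhd ℂ (u k) (Metric.ball (0 : ℂ) 1)) ∧
      (∀ k : ℕ, ContinuousOn (u k) (Metric.closedBall (0 : ℂ) 1)) ∧
      (∀ z : ℂ, z ∈ Metric.closedBall (0 : ℂ) 1 → z ≠ 0 → z ≠ 1 → z ≠ -1 → ∀ k : ℕ,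
        Summable (fun m : ℕ => ‖kerT a b c z k (m + k + 1) * u (m + k + 1) z‖) ∧
        u k z = z ^ k + ∑' m : ℕ, kerT a b c z k (m + k + 1) * u (m + k + 1) z) ∧
      (∀ z : ℂ, z ∈ Metric.closedBall (0 : ℂ) 1 → ∀ k : ℕ,
        ‖u k z - z ^ k‖ ≤
          ‖z‖ ^ k *
            (Real.exp (‖z‖ *
                ∑' n : ℕ, ((n + k + 1 : ℝ) * (‖b (n + k + 1)‖ + ‖1 - a (n + k) * c (n + k)‖))) - 1)) :=
  stmt9_general a b c hΔ1
end
end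

section
/- Let z ∈ ℂ with z ≠ 0 and z² ≠ 1. Then for all integers k and m the Green kernel satisfies the two identities: G(k,m−1;z) + G(k,m+1;z) − (z + 1/z) G(k,m;z) = δ_{k,m} and G(k−1,m;z) + G(k+1,m;z) − (z + 1/z) G(k,m;z) = δ_{k,m}, where δ_{k,m} is the Kronecker delta (equal to 1 if k = m and 0 otherwise). -/
/-!
Both identities depend only on `n = m - k`: `G(k,m;z) = g(m - k)`, where `g(n)` vanishes for
`n < 0` and equals `(zⁿ - z⁻ⁿ)/(z - z⁻¹)` for `n ≥ 0`. The latter expression solves the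
recurrence `g(n-1) + g(n+1) = (z + 1/z) g(n)` on all of `ℤ`, so the truncation can only spoil
it at `n = 0`, where the defect is `g(1) = 1`.
-/

noncomputable section

section CausalGreen

variable {K : Type*} [Field K]

def causalGreen (z : K) (n : ℤ) : K :=
  if 0 ≤ n then (z ^ n - z ^ (-n)) / (z - z⁻¹) else 0

lemma sub_inv_ne_zero_of_sq_ne_one {z : K} (hz0 : z ≠ 0) (hz2 : z ^ 2 ≠ 1) : z - z⁻¹ ≠ 0 := by
  contrapose! hz2
  field_simp at hz2
  linear_combination hz2

lemma zpow_sub_zpow_neg_recurrence {z : K} (hz0 : z ≠ 0) (n : ℤ) :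
    (z ^ (n - 1) - z ^ (-(n - 1))) + (z ^ (n + 1) - z ^ (-(n + 1)))
      = (z + 1 / z) * (z ^ n - z ^ (-n)) := by
  have hzn : z ^ n ≠ 0 := zpow_ne_zero n hz0
  rw [zpow_sub₀ hz0, neg_sub, zpow_sub₀ hz0, zpow_add₀ hz0, neg_add, zpow_add₀ hz0, zpow_one,
    zpow_neg_one, zpow_neg]
  field_simp
  ring

lemma causalGreen_of_neg {z : K} {n : ℤ} (hn : n < 0) : causalGreen z n = 0 :=
  if_neg (not_le.mpr hn)

lemma causalGreen_zero (z : K) : causalGreen z 0 = 0 := by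
  simp [causalGreen]

lemma causalGreen_one {z : K} (hz : z - z⁻¹ ≠ 0) : causalGreen z 1 = 1 := by
  simp [causalGreen, div_self hz]

lemma causalGreen_recurrence {z : K} (hz0 : z ≠ 0) (hz : z - z⁻¹ ≠ 0) (n : ℤ) :
    causalGreen z (n - 1) + causalGreen z (n + 1) - (z + 1 / z) * causalGreen z n
      = if n = 0 then 1 else 0 := by
  rcases lt_trichotomy n 0 with hneg | rfl | hpos
  · have hsucc : causalGreen z (n + 1) = 0 := by
      rcases (show n + 1 < 0 ∨ n + 1 = 0 by omega) with h | h
      · exact causalGreen_of_neg h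
      · rw [h, causalGreen_zero]
    simp [causalGreen_of_neg hneg, causalGreen_of_neg (show n - 1 < 0 by omega), hsucc,
      hneg.ne]
  · simp [causalGreen_of_neg (show (-1 : ℤ) < 0 by norm_num), causalGreen_one hz,
      causalGreen_zero]
  · simp only [causalGreen, if_pos (show 0 ≤ n - 1 by omega), if_pos (show 0 ≤ n + 1 by omega),
      if_pos hpos.le, if_neg hpos.ne']
    rw [← add_div, zpow_sub_zpow_neg_recurrence hz0, mul_div_assoc, sub_self]

end CausalGreen

lemma greenG_eq_causalGreen (z : ℂ) (k m : ℤ) : greenG z k m = causalGreen z (m - k) := by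
  simp only [greenG, causalGreen, sub_nonneg, neg_sub]

/-- Identities for the Green kernel (relations (1.2) in the paper):
`G(k,m-1;z) + G(k,m+1;z) - (z + 1/z) G(k,m;z) = δ_{k,m}` and
`G(k-1,m;z) + G(k+1,m;z) - (z + 1/z) G(k,m;z) = δ_{k,m}`. -/
theorem stmt10 (z : ℂ) (hz0 : z ≠ 0) (hz2 : z ^ 2 ≠ 1) (k m : ℤ) :
    greenG z k (m - 1) + greenG z k (m + 1) - (z + 1 / z) * greenG z k m
        = (if k = m then (1 : ℂ) else 0) ∧
      greenG z (k - 1) m + greenG z (k + 1) m - (z + 1 / z) * greenG z k m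
        = (if k = m then (1 : ℂ) else 0) := by
  have hrec := causalGreen_recurrence hz0 (sub_inv_ne_zero_of_sq_ne_one hz0 hz2) (m - k)
  simp only [sub_eq_zero, eq_comm (a := m)] at hrec
  simp only [greenG_eq_causalGreen]
  constructor
  · rwa [show m - 1 - k = m - k - 1 by ring, show m + 1 - k = m - k + 1 by ring]
  · rwa [show m - (k - 1) = m - k + 1 by ring, show m - (k + 1) = m - k - 1 by ring,
      add_comm (causalGreen z (m - k + 1))]
end
end

section
/- Let a, b, c : ℕ → ℂ (indexed from 1, with the convention a_0 = c_0 = 1) and set δ_m := |b_m| + |1 − a_{m−1} c_{m−1}|. Then for every z in the closed unit disk with z ≠ ±1, every integer k ≥ 0 and every integer m ≥ 1, the modified kernel T̃(k,m;z) := z^{m−k} T(k,m;z) satisfies |T̃(k,m;z)| ≤ δ_m · |z| · min{ max(m−k, 0), 2/|1 − z²| }. In particular, |T̃(k,m;z)| ≤ |ω(z)| δ_m, where ω(z) := 2z/(1 − z²). -/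
/-!
For `m = k + n + 1`, `z^{m-k} G(k,m;z) = z (1 + z² + ⋯ + z^{2n})` is `z` times a geometric sum in
`z²`, bounded by its number of terms and, through its closed form, by `2/|1 - z²|` when
`|z| ≤ 1`. Then `T̃(k,m;z)` is a combination of two such sums with coefficients `b_m` and
`1 - a_{m-1} c_{m-1}`, the second carrying an extra factor `z` of modulus at most one.
-/

noncomputable section

open Finset

theorem norm_geom_sum_le_min {𝕜 : Type*} [NormedDivisionRing 𝕜] {w : 𝕜} (hw : ‖w‖ ≤ 1)
    (hw1 : w ≠ 1) (n : ℕ) : ‖∑ i ∈ range n, w ^ i‖ ≤ min (n : ℝ) (2 / ‖1 - w‖) := by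
  have hpow : ∀ j : ℕ, ‖w ^ j‖ ≤ 1 := fun j => by
    rw [norm_pow]; exact pow_le_one₀ (norm_nonneg w) hw
  refine le_min ?_ ?_
  · calc ‖∑ i ∈ range n, w ^ i‖ ≤ ∑ i ∈ range n, ‖w ^ i‖ := norm_sum_le _ _
      _ ≤ ∑ _i ∈ range n, (1 : ℝ) := sum_le_sum fun i _ => hpow i
      _ = n := by simp
  · have hnum : ‖1 - w ^ n‖ ≤ 2 := by
      calc ‖1 - w ^ n‖ ≤ ‖(1 : 𝕜)‖ + ‖w ^ n‖ := norm_sub_le _ _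
        _ ≤ 2 := by rw [norm_one]; linarith [hpow n]
    rw [geom_sum_eq hw1, ← neg_div_neg_eq, neg_sub, neg_sub, norm_div]
    gcongr

theorem greenG_of_le {z : ℂ} {k m : ℤ} (h : m ≤ k) : greenG z k m = 0 := by
  rcases h.eq_or_lt with rfl | hlt
  · simp [greenG]
  · simp [greenG, not_le.mpr hlt]

/-- Also true at `z = 0`: there `z - z⁻¹ = 0`, so `greenG` is `0` by the junk value of division. -/
theorem zpow_mul_greenG {z : ℂ} (hz2 : z ^ 2 ≠ 1) (k : ℤ) (n : ℕ) :
    z ^ (n : ℤ) * greenG z k (k + n) = z * ∑ i ∈ range n, (z ^ 2) ^ i := by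
  rcases eq_or_ne z 0 with rfl | hz0
  · simp [greenG]
  have hsq : z ^ 2 - 1 ≠ 0 := sub_ne_zero.mpr hz2
  rw [geom_sum_eq hz2, greenG, if_pos (by omega), show k + n - k = n by ring,
    show k - (k + n) = -n by ring, zpow_neg, zpow_natCast,
    show z - z⁻¹ = (z ^ 2 - 1) / z by field_simp]
  field_simp
  ring

theorem zpow_mul_kerT {z : ℂ} (hz2 : z ^ 2 ≠ 1) (a b c : ℕ → ℂ) (k n : ℕ) :
    z ^ (((k + n + 1 : ℕ) : ℤ) - k) * kerT a b c z k (k + n + 1) =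
      -b (k + n + 1) * (z * ∑ i ∈ range (n + 1), (z ^ 2) ^ i) +
        (1 - a (k + n) * c (k + n)) * z * (z * ∑ i ∈ range n, (z ^ 2) ^ i) := by
  rw [kerT, Nat.add_sub_cancel, ← zpow_mul_greenG hz2 k n, ← zpow_mul_greenG hz2 k (n + 1),
    show ((k + n + 1 : ℕ) : ℤ) - k = ((n + 1 : ℕ) : ℤ) by push_cast; ring,
    show ((k + n + 1 : ℕ) : ℤ) = k + ((n + 1 : ℕ) : ℤ) by push_cast; ring,
    show (k : ℤ) + ((n + 1 : ℕ) : ℤ) - 1 = k + n by push_cast; ring,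
    zpow_natCast, zpow_natCast, pow_succ]
  ring

theorem norm_zpow_mul_kerT_le {z : ℂ} (hz : ‖z‖ ≤ 1) (hz2 : z ^ 2 ≠ 1) (a b c : ℕ → ℂ) (k m : ℕ) :
    ‖z ^ ((m : ℤ) - k) * kerT a b c z k m‖ ≤
      (‖b m‖ + ‖1 - a (m - 1) * c (m - 1)‖) *
        (‖z‖ * min (max ((m : ℝ) - k) 0) (2 / ‖1 - z ^ 2‖)) := by
  obtain hmk | ⟨n, rfl⟩ : m ≤ k ∨ ∃ n, m = k + n + 1 :=
    (le_or_gt m k).imp_right fun h => ⟨m - k - 1, by omega⟩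
  · rw [kerT, greenG_of_le (by omega), greenG_of_le (by omega)]
    simp only [mul_zero, add_zero, norm_zero]
    positivity
  have hw : ‖z ^ 2‖ ≤ 1 := by rw [norm_pow]; exact pow_le_one₀ (norm_nonneg z) hz
  let M := min ((n : ℝ) + 1) (2 / ‖1 - z ^ 2‖)
  have hS1 : ‖∑ i ∈ range (n + 1), (z ^ 2) ^ i‖ ≤ M := by
    simpa [M] using norm_geom_sum_le_min hw hz2 (n + 1)
  have hS0 : ‖z‖ * ‖∑ i ∈ range n, (z ^ 2) ^ i‖ ≤ M := by
    calc ‖z‖ * ‖∑ i ∈ range n, (z ^ 2) ^ i‖ ≤ 1 * min (n : ℝ) (2 / ‖1 - z ^ 2‖) :=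
          mul_le_mul hz (norm_geom_sum_le_min hw hz2 n) (norm_nonneg _) zero_le_one
      _ ≤ M := by rw [one_mul]; exact min_le_min (by linarith) le_rfl
  rw [zpow_mul_kerT hz2, Nat.add_sub_cancel, show max (((k + n + 1 : ℕ) : ℝ) - k) 0 = n + 1 by
    push_cast; rw [max_eq_left] <;> linarith [(n.cast_nonneg : (0 : ℝ) ≤ n)]]
  calc _ ≤ ‖b (k + n + 1)‖ * (‖z‖ * ‖∑ i ∈ range (n + 1), (z ^ 2) ^ i‖) +
          ‖1 - a (k + n) * c (k + n)‖ * (‖z‖ * (‖z‖ * ‖∑ i ∈ range n, (z ^ 2) ^ i‖)) := by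
        refine (norm_add_le _ _).trans_eq ?_
        simp only [norm_mul, norm_neg]
        ring
    _ ≤ _ := by rw [add_mul]; gcongr

theorem stmt11_general (a b c : ℕ → ℂ)
    (z : ℂ) (hz : ‖z‖ ≤ 1) (hzp : z ≠ 1) (hzm : z ≠ -1)
    (k m : ℕ) :
    ‖z ^ ((m : ℤ) - (k : ℤ)) * kerT a b c z k m‖ ≤
        (‖b m‖ + ‖1 - a (m - 1) * c (m - 1)‖) *
          (‖z‖ * min (max ((m : ℝ) - (k : ℝ)) 0) (2 / ‖1 - z ^ 2‖)) ∧
      ‖z ^ ((m : ℤ) - (k : ℤ)) * kerT a b c z k m‖ ≤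
        ‖2 * z / (1 - z ^ 2)‖ * (‖b m‖ + ‖1 - a (m - 1) * c (m - 1)‖) := by
  have hbound := norm_zpow_mul_kerT_le hz (sq_ne_one_iff.mpr ⟨hzp, hzm⟩) a b c k m
  refine ⟨hbound, hbound.trans ?_⟩
  have hω : ‖2 * z / (1 - z ^ 2)‖ = ‖z‖ * (2 / ‖1 - z ^ 2‖) := by
    rw [norm_div, norm_mul, Complex.norm_two]; ring
  rw [hω, mul_comm (‖z‖ * _)]
  gcongr
  exact min_le_right _ _

/-- Bounds (1.10)–(1.11) for the modified kernel `T̃(k,m;z) = z^{m-k} T(k,m;z)`: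
`|T̃(k,m;z)| ≤ δ_m |z| min{(m-k)₊, 2/|1-z²|}` and, in particular,
`|T̃(k,m;z)| ≤ |ω(z)| δ_m`, where `ω(z) = 2z/(1-z²)` and
`δ_m = |b_m| + |1 - a_{m-1} c_{m-1}|`. -/
theorem stmt11 (a b c : ℕ → ℂ) (ha0 : a 0 = 1) (hc0 : c 0 = 1)
    (z : ℂ) (hz : ‖z‖ ≤ 1) (hzp : z ≠ 1) (hzm : z ≠ -1)
    (k m : ℕ) (hm : 1 ≤ m) :
    ‖z ^ ((m : ℤ) - (k : ℤ)) * kerT a b c z k m‖ ≤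
        (‖b m‖ + ‖1 - a (m - 1) * c (m - 1)‖) *
          (‖z‖ * min (max ((m : ℝ) - (k : ℝ)) 0) (2 / ‖1 - z ^ 2‖)) ∧
      ‖z ^ ((m : ℤ) - (k : ℤ)) * kerT a b c z k m‖ ≤
        ‖2 * z / (1 - z ^ 2)‖ * (‖b m‖ + ‖1 - a (m - 1) * c (m - 1)‖) :=
  stmt11_general a b c z hz hzp hzm k m
end
end

section
/- Let δ : ℕ → ℝ be a nonnegative summable sequence (indexed from 1), and set s(k) := ∑_{n=k+1}^∞ δ_n for k ≥ 0. Then for every integer j ≥ 0 and every k ≥ 0, ∑_{m=k+1}^∞ δ_m · s(m)^j ≤ s(k)^{j+1}/(j+1). -/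
/-!
With `s` decreasing to `0` and `δ (m + 1) = s m - s (m + 1)`, each term
`(s m - s (m + 1)) * s (m + 1) ^ j` is at most `(s m ^ (j + 1) - s (m + 1) ^ (j + 1)) / (j + 1)`
(the tangent-line inequality for `x ↦ x ^ (j + 1)`); the left side is thus a lower Riemann sum of
`∫₀^{s k} x ^ j dx`, and the bounding sum telescopes.
-/

open Finset

theorem add_one_mul_pow_mul_sub_le_pow_succ_sub {R : Type*} [CommRing R] [LinearOrder R]
    [IsStrictOrderedRing R] {a b : R} (hb : 0 ≤ b) (hba : b ≤ a) (n : ℕ) :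
    ((n : R) + 1) * b ^ n * (a - b) ≤ a ^ (n + 1) - b ^ (n + 1) := by
  induction n with
  | zero => simp
  | succ n ih =>
    have hab : 0 ≤ a - b := sub_nonneg.mpr hba
    push_cast
    calc ((n : R) + 1 + 1) * b ^ (n + 1) * (a - b)
        = ((n : R) + 1) * b ^ n * (a - b) * b + b ^ (n + 1) * (a - b) := by ring
      _ ≤ ((n : R) + 1) * b ^ n * (a - b) * a + b ^ (n + 1) * (a - b) := by gcongr
      _ ≤ (a ^ (n + 1) - b ^ (n + 1)) * a + b ^ (n + 1) * (a - b) := by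
        gcongr
        exact hb.trans hba
      _ = a ^ (n + 1 + 1) - b ^ (n + 1 + 1) := by ring

theorem Antitone.tsum_sub_mul_pow_le {t : ℕ → ℝ} (ht : Antitone t) (ht_nonneg : ∀ m, 0 ≤ t m)
    (j : ℕ) :
    ∑' m, (t m - t (m + 1)) * t (m + 1) ^ j ≤ t 0 ^ (j + 1) / ((j : ℝ) + 1) := by
  have hstep : ∀ m, t (m + 1) ≤ t m := fun m => ht m.le_succ
  have hterm : ∀ m, (t m - t (m + 1)) * t (m + 1) ^ j
      ≤ (t m ^ (j + 1) - t (m + 1) ^ (j + 1)) / ((j : ℝ) + 1) := fun m => by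
    rw [le_div_iff₀ (by positivity)]
    linarith [add_one_mul_pow_mul_sub_le_pow_succ_sub (ht_nonneg (m + 1)) (hstep m) j]
  refine Real.tsum_le_of_sum_range_le
    (fun m => mul_nonneg (sub_nonneg.mpr (hstep m)) (pow_nonneg (ht_nonneg _) _)) fun N => ?_
  calc ∑ m ∈ range N, (t m - t (m + 1)) * t (m + 1) ^ j
      ≤ ∑ m ∈ range N, (t m ^ (j + 1) - t (m + 1) ^ (j + 1)) / ((j : ℝ) + 1) :=
        sum_le_sum fun m _ => hterm m
    _ = (t 0 ^ (j + 1) - t N ^ (j + 1)) / ((j : ℝ) + 1) := by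
        rw [← sum_div, sum_range_sub']
    _ ≤ t 0 ^ (j + 1) / ((j : ℝ) + 1) := by
        gcongr
        linarith [pow_nonneg (ht_nonneg N) (j + 1)]

theorem tsum_mul_tsum_nat_add_pow_le {δ : ℕ → ℝ} (hpos : ∀ n, 0 ≤ δ n) (hsum : Summable δ)
    (j : ℕ) :
    ∑' m, δ m * (∑' n, δ (n + m + 1)) ^ j ≤ (∑' n, δ n) ^ (j + 1) / ((j : ℝ) + 1) := by
  set T : ℕ → ℝ := fun p => ∑' n, δ (n + p)
  have hsucc : ∀ p, T p = δ p + T (p + 1) := fun p => by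
    simpa [T, add_right_comm _ 1 p, add_assoc] using
      ((summable_nat_add_iff p).mpr hsum).tsum_eq_zero_add
  have hδ : ∀ m, δ m = T m - T (m + 1) := fun m => by linarith [hsucc m]
  have hanti : Antitone T := antitone_nat_of_succ_le fun p => by linarith [hsucc p, hpos p]
  have hT_nonneg : ∀ p, 0 ≤ T p := fun p => tsum_nonneg fun n => hpos _
  calc ∑' m, δ m * (∑' n, δ (n + m + 1)) ^ j = ∑' m, (T m - T (m + 1)) * T (m + 1) ^ j := by
        simp only [← hδ, T, add_assoc]
    _ ≤ T 0 ^ (j + 1) / ((j : ℝ) + 1) := hanti.tsum_sub_mul_pow_le hT_nonneg j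
    _ = (∑' n, δ n) ^ (j + 1) / ((j : ℝ) + 1) := by simp [T]

/-- The elementary tail-sum estimate used in the successive approximations
(proof of Theorem 1.2): for a nonnegative summable sequence `δ` (indexed from 1)
with tail sums `s(k) = ∑_{n=k+1}^∞ δ_n`, one has
`∑_{m=k+1}^∞ δ_m s(m)^j ≤ s(k)^{j+1}/(j+1)` for all `j, k ≥ 0`. -/
theorem stmt12 (δ : ℕ → ℝ) (hpos : ∀ n : ℕ, 0 ≤ δ n) (hsum : Summable δ)
    (j k : ℕ) :
    ∑' m : ℕ, δ (m + k + 1) * (∑' n : ℕ, δ (n + (m + k + 1) + 1)) ^ j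
      ≤ (∑' n : ℕ, δ (n + k + 1)) ^ (j + 1) / ((j : ℝ) + 1) := by
  have h := tsum_mul_tsum_nat_add_pow_le (δ := fun n => δ (n + k + 1)) (fun n => hpos _)
    ((summable_nat_add_iff (k + 1)).mpr hsum) j
  have hidx : ∀ m n, n + (m + k + 1) + 1 = n + m + 1 + k + 1 := by omega
  simpa only [hidx] using h
end
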